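/- arXiv:2602.22201 — 6 statements merged into one kernel-verified Lean document; each statement's English description precedes it below -/
import Mathlib

section
/- Let n ≥ 1, let U ∈ U(2^n) be a unitary, and let k ≥ 2. If the controlled gate CU lies in the k-th level 𝒞_k^{(n+1)} of the (n+1)-qubit Clifford hierarchy, then U^{2^{k-2}} lies in the n-qubit Pauli group 𝒫_n up to a global phase, and moreover U ∈ 𝒞_k^{(n)}. -/
open Matrix

/-- Index type for the computational basis of `n` qubits. -/
abbrev QIdx (n : ℕ) := Fin n → ZMod 2

/-- `2^n × 2^n` complex matrices, indexed by bitstrings. -/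
abbrev QMat (n : ℕ) := Matrix (QIdx n) (QIdx n) ℂ

/-- Single-qubit Pauli `X = [[0,1],[1,0]]`. -/
def pauliX : Matrix (ZMod 2) (ZMod 2) ℂ :=
  Matrix.of fun a b => if a = b then 0 else 1

/-- Single-qubit Pauli `Y = [[0,-i],[i,0]]`. -/
def pauliY : Matrix (ZMod 2) (ZMod 2) ℂ :=
  Matrix.of fun a b => if a = b then 0 else if a = 0 then -Complex.I else Complex.I

/-- Single-qubit Pauli `Z = [[1,0],[0,-1]]`. -/
def pauliZ : Matrix (ZMod 2) (ZMod 2) ℂ :=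
  Matrix.of fun a b => if a = b then (if a = 0 then 1 else -1) else 0

/-- The `n`-qubit Pauli group: all `ω P₁⊗⋯⊗Pₙ` with `ω ∈ {±1, ±i}` and
each `Pⱼ ∈ {I, X, Y, Z}` (the Kronecker product is written entrywise). -/
def PauliGroup (n : ℕ) : Set (QMat n) :=
  { M | ∃ (ω : ℂ) (P : Fin n → Matrix (ZMod 2) (ZMod 2) ℂ),
      (ω = 1 ∨ ω = -1 ∨ ω = Complex.I ∨ ω = -Complex.I) ∧
      (∀ j, P j = 1 ∨ P j = pauliX ∨ P j = pauliY ∨ P j = pauliZ) ∧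
      M = ω • Matrix.of (fun a b => ∏ j, P j (a j) (b j)) }

/-- Auxiliary (0-based) Clifford hierarchy: level `0` is the Pauli group, and
level `k+1` consists of the unitaries conjugating Paulis into level `k`. -/
def CHaux (n : ℕ) : ℕ → Set (QMat n)
  | 0 => PauliGroup n
  | k + 1 => { U | U ∈ Matrix.unitaryGroup (QIdx n) ℂ ∧
      ∀ P ∈ PauliGroup n, U * P * Uᴴ ∈ CHaux n k }

/-- `CLevel n k` is the `k`-th level `𝒞ₖ⁽ⁿ⁾` of the `n`-qubit Clifford hierarchy
(meaningful for `k ≥ 1`): `CLevel n 1` is the Pauli group and `CLevel n 2` is the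
Clifford group. -/
def CLevel (n k : ℕ) : Set (QMat n) := CHaux n (k - 1)

/-- `M` lies in the `n`-qubit Pauli group up to a global phase. -/
def IsPauliUpToPhase (n : ℕ) (M : QMat n) : Prop :=
  ∃ (c : ℂ) (P : QMat n), ‖c‖ = 1 ∧ P ∈ PauliGroup n ∧ M = c • P

/-- `U` has Pauli periodicity `m`: `U^(2^m)` is Pauli up to phase while no
`U^(2^t)` with `t < m` is. -/
def HasPauliPeriodicity (n m : ℕ) (U : QMat n) : Prop :=
  IsPauliUpToPhase n (U ^ (2 ^ m)) ∧ ∀ t, t < m → ¬ IsPauliUpToPhase n (U ^ (2 ^ t))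

/-- The controlled gate `CU` on `n+1` qubits (qubit `0` is the control):
the block-diagonal matrix with blocks `I` and `U`. -/
def controlled {n : ℕ} (U : QMat n) : QMat (n + 1) :=
  Matrix.of fun a b =>
    if a 0 = b 0 then
      (if a 0 = 0 then (if Fin.tail a = Fin.tail b then (1 : ℂ) else 0)
       else U (Fin.tail a) (Fin.tail b))
    else 0

/-
Split off the control qubit, so that an `(n+1)`-qubit matrix becomes a `2 × 2` block matrix over
`n` qubits, with `CU = diag(I, U)`. Each of the four blocks of an `(n+1)`-qubit Pauli is either
`0` or an `n`-qubit Pauli.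

Conjugation by `diag(A, B)` sends `I ⊗ Q` to `diag(A Q A†, B Q B†)`; by induction on the level,
`diag(A, B) ∈ 𝒞_t` forces `B ∈ 𝒞_t`, whence `U ∈ 𝒞_k`.

Conjugating `X ⊗ I` by `CU` gives `[[0, U†], [U, 0]] ∈ 𝒞_{k-1}`, and conjugating `X ⊗ I` by
`[[0, A†], [A, 0]]` gives `[[0, (A²)†], [A², 0]]`. After `k - 2` squarings one reaches a Pauli
whose lower-left block is `U^(2^(k-2))`, which is therefore a Pauli.
-/

section

variable {n : ℕ}

def IsPhase (ω : ℂ) : Prop :=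
  ω = 1 ∨ ω = -1 ∨ ω = Complex.I ∨ ω = -Complex.I

def IsPauliFactor (S : Matrix (ZMod 2) (ZMod 2) ℂ) : Prop :=
  S = 1 ∨ S = pauliX ∨ S = pauliY ∨ S = pauliZ

def qubitTensor (P : Fin n → Matrix (ZMod 2) (ZMod 2) ℂ) : QMat n :=
  Matrix.of fun a b => ∏ j, P j (a j) (b j)

lemma zmod_two_eq_zero_or_one : ∀ x : ZMod 2, x = 0 ∨ x = 1 := by decide

lemma ZMod.sum_univ_two {M : Type*} [AddCommMonoid M] (f : ZMod 2 → M) :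
    ∑ c, f c = f 0 + f 1 := by
  rw [show (Finset.univ : Finset (ZMod 2)) = {0, 1} by decide, Finset.sum_pair (by decide)]

lemma IsPhase.mul {ω ω' : ℂ} (h : IsPhase ω) (h' : IsPhase ω') : IsPhase (ω * ω') := by
  unfold IsPhase at *
  rcases h with rfl | rfl | rfl | rfl <;> rcases h' with rfl | rfl | rfl | rfl <;> simp

lemma IsPhase.star_mul_self {ω : ℂ} (h : IsPhase ω) : star ω * ω = 1 := by
  rcases h with rfl | rfl | rfl | rfl <;> simp

lemma IsPauliFactor.conjTranspose_mul_self {S : Matrix (ZMod 2) (ZMod 2) ℂ}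
    (h : IsPauliFactor S) : Sᴴ * S = 1 := by
  ext a b
  rw [Matrix.mul_apply, ZMod.sum_univ_two]
  rcases h with rfl | rfl | rfl | rfl <;>
    rcases zmod_two_eq_zero_or_one a with rfl | rfl <;>
    rcases zmod_two_eq_zero_or_one b with rfl | rfl <;>
    simp [pauliX, pauliY, pauliZ]

lemma IsPauliFactor.apply_eq_zero_or_isPhase {S : Matrix (ZMod 2) (ZMod 2) ℂ}
    (h : IsPauliFactor S) (a b : ZMod 2) : S a b = 0 ∨ IsPhase (S a b) := by
  unfold IsPhase
  rcases h with rfl | rfl | rfl | rfl <;>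
    rcases zmod_two_eq_zero_or_one a with rfl | rfl <;>
    rcases zmod_two_eq_zero_or_one b with rfl | rfl <;>
    simp [pauliX, pauliY, pauliZ]

lemma qubitTensor_one : qubitTensor (fun _ : Fin n => 1) = 1 := by
  ext a b
  by_cases h : a = b
  · simp [qubitTensor, h, Matrix.one_apply]
  · obtain ⟨j, hj⟩ := Function.ne_iff.mp h
    simp only [qubitTensor, Matrix.of_apply, Matrix.one_apply_ne h]
    exact Finset.prod_eq_zero (Finset.mem_univ j) (Matrix.one_apply_ne hj)

lemma qubitTensor_mul (P Q : Fin n → Matrix (ZMod 2) (ZMod 2) ℂ) :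
    qubitTensor P * qubitTensor Q = qubitTensor fun j => P j * Q j := by
  ext a b
  simp only [qubitTensor, Matrix.mul_apply, Matrix.of_apply, ← Finset.prod_mul_distrib]
  rw [Finset.prod_univ_sum, Fintype.piFinset_univ]

lemma conjTranspose_qubitTensor (P : Fin n → Matrix (ZMod 2) (ZMod 2) ℂ) :
    (qubitTensor P)ᴴ = qubitTensor fun j => (P j)ᴴ := by
  ext a b
  simp [qubitTensor, Matrix.conjTranspose_apply]

lemma smul_qubitTensor_mem_pauliGroup {ω : ℂ} {P : Fin n → Matrix (ZMod 2) (ZMod 2) ℂ}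
    (hω : IsPhase ω) (hP : ∀ j, IsPauliFactor (P j)) : ω • qubitTensor P ∈ PauliGroup n :=
  ⟨ω, P, hω, hP, rfl⟩

lemma mem_unitaryGroup_of_mem_pauliGroup {M : QMat n} (hM : M ∈ PauliGroup n) :
    M ∈ Matrix.unitaryGroup (QIdx n) ℂ := by
  obtain ⟨ω, P, hω, hP, rfl⟩ := hM
  rw [Matrix.mem_unitaryGroup_iff', Matrix.star_eq_conjTranspose, Matrix.conjTranspose_smul,
    smul_mul_smul_comm, IsPhase.star_mul_self hω, one_smul]
  change (qubitTensor P)ᴴ * qubitTensor P = 1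
  simp only [conjTranspose_qubitTensor, qubitTensor_mul,
    fun j => IsPauliFactor.conjTranspose_mul_self (hP j), qubitTensor_one]

lemma ne_zero_of_mem_unitaryGroup {M : QMat n} (hM : M ∈ Matrix.unitaryGroup (QIdx n) ℂ) :
    M ≠ 0 := by
  rintro rfl
  simpa using Matrix.mem_unitaryGroup_iff'.mp hM

def firstQubitEquiv (n : ℕ) : QIdx (n + 1) ≃ QIdx n ⊕ QIdx n where
  toFun a := if a 0 = 0 then .inl (Fin.tail a) else .inr (Fin.tail a)
  invFun x := x.elim (Fin.cons 0) (Fin.cons 1)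
  left_inv a := by
    dsimp only
    rcases zmod_two_eq_zero_or_one (a 0) with h | h
    · rw [if_pos h, Sum.elim_inl, ← h, Fin.cons_self_tail]
    · rw [if_neg (by rw [h]; exact one_ne_zero), Sum.elim_inr, ← h, Fin.cons_self_tail]
  right_inv x := by
    rcases x with a | a <;> dsimp only [Sum.elim_inl, Sum.elim_inr]
    · rw [if_pos (Fin.cons_zero _ _), Fin.tail_cons]
    · rw [if_neg (by rw [Fin.cons_zero]; exact one_ne_zero), Fin.tail_cons]

noncomputable def firstQubitBlocks (n : ℕ) :
    QMat (n + 1) ≃ₐ[ℂ] Matrix (QIdx n ⊕ QIdx n) (QIdx n ⊕ QIdx n) ℂ :=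
  reindexAlgEquiv ℂ ℂ (firstQubitEquiv n)

def qubitBlock (M : QMat (n + 1)) (i j : ZMod 2) : QMat n :=
  Matrix.of fun a b => M (Fin.cons i a) (Fin.cons j b)

lemma firstQubitBlocks_apply (M : QMat (n + 1)) :
    firstQubitBlocks n M = fromBlocks (qubitBlock M 0 0) (qubitBlock M 0 1)
      (qubitBlock M 1 0) (qubitBlock M 1 1) := by
  ext (a | a) (b | b) <;> rfl

lemma firstQubitBlocks_conjTranspose (M : QMat (n + 1)) :
    firstQubitBlocks n Mᴴ = (firstQubitBlocks n M)ᴴ :=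
  (conjTranspose_reindex _ _ M).symm

lemma firstQubitBlocks_conj (M N : QMat (n + 1)) :
    firstQubitBlocks n (M * N * Mᴴ) =
      firstQubitBlocks n M * firstQubitBlocks n N * (firstQubitBlocks n M)ᴴ := by
  rw [map_mul, map_mul, firstQubitBlocks_conjTranspose]

lemma qubitBlock_smul_qubitTensor (ω : ℂ) (P : Fin (n + 1) → Matrix (ZMod 2) (ZMod 2) ℂ)
    (i j : ZMod 2) :
    qubitBlock (ω • qubitTensor P) i j = (ω * P 0 i j) • qubitTensor (Fin.tail P) := by
  ext a b
  simp [qubitBlock, qubitTensor, Fin.prod_univ_succ, Fin.tail, mul_assoc]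

lemma qubitBlock_eq_zero_or_mem_pauliGroup {M : QMat (n + 1)} (hM : M ∈ PauliGroup (n + 1))
    (i j : ZMod 2) : qubitBlock M i j = 0 ∨ qubitBlock M i j ∈ PauliGroup n := by
  obtain ⟨ω, P, hω, hP, rfl⟩ := hM
  rw [show Matrix.of (fun a b => ∏ j, P j (a j) (b j)) = qubitTensor P from rfl,
    qubitBlock_smul_qubitTensor]
  rcases IsPauliFactor.apply_eq_zero_or_isPhase (hP 0) i j with h | h
  · left
    rw [h, mul_zero, zero_smul]
  · exact .inr (smul_qubitTensor_mem_pauliGroup (IsPhase.mul hω h) fun j => hP j.succ)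

lemma firstQubitBlocks_smul_qubitTensor_cons_one (ω : ℂ)
    (P : Fin n → Matrix (ZMod 2) (ZMod 2) ℂ) :
    firstQubitBlocks n (ω • qubitTensor (Fin.cons 1 P)) =
      fromBlocks (ω • qubitTensor P) 0 0 (ω • qubitTensor P) := by
  rw [firstQubitBlocks_apply]
  simp only [qubitBlock_smul_qubitTensor]
  simp

noncomputable def pauliXFirst (n : ℕ) : QMat (n + 1) :=
  qubitTensor (Fin.cons pauliX fun _ => 1)

lemma pauliXFirst_mem_pauliGroup : pauliXFirst n ∈ PauliGroup (n + 1) :=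
  ⟨1, _, .inl rfl, Fin.cases (.inr (.inl rfl)) fun _ => .inl rfl, (one_smul ℂ _).symm⟩

lemma firstQubitBlocks_pauliXFirst : firstQubitBlocks n (pauliXFirst n) = fromBlocks 0 1 1 0 := by
  rw [firstQubitBlocks_apply, pauliXFirst, ← one_smul ℂ (qubitTensor _)]
  simp only [qubitBlock_smul_qubitTensor]
  simp [pauliX, qubitTensor_one]

lemma firstQubitBlocks_controlled (U : QMat n) :
    firstQubitBlocks n (controlled U) = fromBlocks 1 0 0 U := by
  ext (a | a) (b | b) <;> simp [firstQubitBlocks, firstQubitEquiv, controlled, Matrix.one_apply]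

lemma mem_unitaryGroup_of_firstQubitBlocks_eq_fromBlocks {M : QMat (n + 1)} {A B : QMat n}
    (hM : M ∈ Matrix.unitaryGroup (QIdx (n + 1)) ℂ)
    (hMAB : firstQubitBlocks n M = fromBlocks A 0 0 B) :
    B ∈ Matrix.unitaryGroup (QIdx n) ℂ := by
  have h := congrArg (firstQubitBlocks n) (Matrix.mem_unitaryGroup_iff'.mp hM)
  rw [Matrix.star_eq_conjTranspose, map_mul, map_one, firstQubitBlocks_conjTranspose, hMAB,
    fromBlocks_conjTranspose, fromBlocks_multiply, ← fromBlocks_one] at h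
  simp only [conjTranspose_zero, Matrix.mul_zero, Matrix.zero_mul, add_zero, zero_add,
    fromBlocks_inj] at h
  exact Matrix.mem_unitaryGroup_iff'.mpr h.2.2.2

lemma mem_CHaux_of_firstQubitBlocks_eq_fromBlocks {t : ℕ} {M : QMat (n + 1)} {A B : QMat n}
    (hM : M ∈ CHaux (n + 1) t) (hMAB : firstQubitBlocks n M = fromBlocks A 0 0 B) :
    B ∈ CHaux n t := by
  induction t generalizing M A B with
  | zero =>
    have hB := mem_unitaryGroup_of_firstQubitBlocks_eq_fromBlocks
      (mem_unitaryGroup_of_mem_pauliGroup hM) hMAB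
    rw [firstQubitBlocks_apply, fromBlocks_inj] at hMAB
    rw [← hMAB.2.2.2] at hB ⊢
    exact (qubitBlock_eq_zero_or_mem_pauliGroup hM 1 1).resolve_left
      (ne_zero_of_mem_unitaryGroup hB)
  | succ t ih =>
    refine ⟨mem_unitaryGroup_of_firstQubitBlocks_eq_fromBlocks hM.1 hMAB, ?_⟩
    rintro _ ⟨ω, P, hω, hP, rfl⟩
    have hL : ω • qubitTensor (Fin.cons 1 P) ∈ PauliGroup (n + 1) :=
      smul_qubitTensor_mem_pauliGroup hω (Fin.cases (.inl rfl) hP)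
    refine ih (hM.2 _ hL) (A := A * (ω • qubitTensor P) * Aᴴ) ?_
    rw [firstQubitBlocks_conj, hMAB, firstQubitBlocks_smul_qubitTensor_cons_one]
    simp [fromBlocks_conjTranspose, fromBlocks_multiply, qubitTensor]

lemma pow_two_pow_mem_pauliGroup_of_firstQubitBlocks_eq_fromBlocks {t : ℕ} {M : QMat (n + 1)}
    {A : QMat n} (hM : M ∈ CHaux (n + 1) t) (hMA : firstQubitBlocks n M = fromBlocks 0 Aᴴ A 0) :
    A ^ 2 ^ t ∈ PauliGroup n := by
  induction t generalizing M A with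
  | zero =>
    have hM0 : firstQubitBlocks n M ≠ 0 :=
      (map_ne_zero_iff _ (firstQubitBlocks n).injective).mpr
        (ne_zero_of_mem_unitaryGroup (mem_unitaryGroup_of_mem_pauliGroup hM))
    have hA : A = qubitBlock M 1 0 := by
      rw [firstQubitBlocks_apply, fromBlocks_inj] at hMA
      exact hMA.2.2.1.symm
    rw [pow_zero, pow_one, hA]
    refine (qubitBlock_eq_zero_or_mem_pauliGroup hM 1 0).resolve_left fun h0 => hM0 ?_
    rw [hMA, hA, h0, conjTranspose_zero, fromBlocks_zero]
  | succ t ih =>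
    rw [pow_succ', pow_mul]
    refine ih (hM.2 _ pauliXFirst_mem_pauliGroup) ?_
    rw [firstQubitBlocks_conj, hMA, firstQubitBlocks_pauliXFirst]
    simp [fromBlocks_conjTranspose, fromBlocks_multiply, sq]

end

theorem controlled_in_hierarchy_necessary_general (n k : ℕ) (hk : 2 ≤ k)
    (U : QMat n) (hCU : controlled U ∈ CLevel (n + 1) k) :
    IsPauliUpToPhase n (U ^ (2 ^ (k - 2))) ∧ U ∈ CLevel n k := by
  obtain ⟨t, rfl⟩ : ∃ t, k = t + 2 := ⟨k - 2, by omega⟩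
  have hCU' : controlled U ∈ CHaux (n + 1) (t + 1) := hCU
  have hUX : firstQubitBlocks n (controlled U * pauliXFirst n * (controlled U)ᴴ) =
      fromBlocks 0 Uᴴ U 0 := by
    rw [firstQubitBlocks_conj, firstQubitBlocks_controlled, firstQubitBlocks_pauliXFirst]
    simp [fromBlocks_conjTranspose, fromBlocks_multiply]
  refine ⟨⟨1, _, norm_one, ?_, (one_smul ℂ _).symm⟩,
    mem_CHaux_of_firstQubitBlocks_eq_fromBlocks hCU' (firstQubitBlocks_controlled U)⟩
  exact pow_two_pow_mem_pauliGroup_of_firstQubitBlocks_eq_fromBlocks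
    (hCU'.2 _ pauliXFirst_mem_pauliGroup) hUX

/-- if `CU ∈ 𝒞_k^{(n+1)}` (k ≥ 2) then `U^(2^(k-2))` is Pauli up to a
global phase and `U ∈ 𝒞_k^{(n)}`. -/
theorem controlled_in_hierarchy_necessary (n k : ℕ) (hn : 1 ≤ n) (hk : 2 ≤ k)
    (U : QMat n) (hU : U ∈ Matrix.unitaryGroup (QIdx n) ℂ)
    (hCU : controlled U ∈ CLevel (n + 1) k) :
    IsPauliUpToPhase n (U ^ (2 ^ (k - 2))) ∧ U ∈ CLevel n k :=
  controlled_in_hierarchy_necessary_general n k hk U hCU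
end

section
/- Upper bound on Pauli periodicity: Let n ≥ 1 and let U ∈ 𝒞_2^{(n)} be an n-qubit Clifford unitary with Pauli periodicity m (i.e., U^{2^m} ∈ 𝒫_n up to a global phase and no smaller power of the form 2^t has this property). Then m ≤ ⌈log₂(2n)⌉. -/
open Matrix

/-! Conjugation by a Clifford `U` sends each Weyl operator `X^x Z^z` to a phase times another
one, and the induced map `f` on the labels `(x, z) ∈ 𝔽₂^{2n}` is linear. If `U^(2^m)` is a Pauli
up to phase then `f^(2^m) = 1`; in characteristic 2 this makes `f - 1` nilpotent, so
`(f - 1)^(2n) = 0`, and for `2^t ≥ 2n` also `f^(2^t) = (f - 1)^(2^t) + 1 = 1`. A unitary fixing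
all labels multiplies the Weyl operators by a character of `𝔽₂^{2n}`; every such character is
the commutation character of a single Weyl operator `W`, so the unitary times `Wᴴ` commutes with
all Weyl operators and is a scalar. Hence `U^(2^t)` is already a Pauli up to phase and `m ≤ t`.
-/

namespace Module.End

theorem pow_char_pow_clog_finrank_eq_one {K V : Type*} [Field K] [AddCommGroup V] [Module K V]
    [FiniteDimensional K V] (p : ℕ) [hp : Fact p.Prime] [CharP K p]
    {f : Module.End K V} {m : ℕ} (hf : f ^ p ^ m = 1) :
    f ^ p ^ Nat.clog p (Module.finrank K V) = 1 := by
  rcases subsingleton_or_nontrivial V with hV | hV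
  · exact Subsingleton.elim _ _
  have : CharP (Module.End K V) p := charP_of_injective_algebraMap' K p
  have hnil : (f - 1) ^ p ^ m = 0 := by
    rw [sub_pow_char_pow_of_commute _ _ (Commute.one_right f), hf, one_pow, sub_self]
  have hfinrank : (f - 1) ^ Module.finrank K V = 0 := by
    have h := LinearMap.aeval_self_charpoly (f - 1)
    rwa [IsNilpotent.charpoly_eq_X_pow_finrank ⟨_, hnil⟩, map_pow, Polynomial.aeval_X] at h
  calc f ^ p ^ Nat.clog p (Module.finrank K V)
      = ((f - 1) + 1) ^ p ^ Nat.clog p (Module.finrank K V) := by rw [sub_add_cancel]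
    _ = 1 := by
      rw [add_pow_char_pow_of_commute _ _ (Commute.one_right _),
        pow_eq_zero_of_le (Nat.le_pow_clog hp.out.one_lt _) hfinrank, one_pow, zero_add]

end Module.End

lemma AddMonoidHom.apply_eq_dotProduct {ι : Type*} [Fintype ι] [DecidableEq ι]
    (L : (ι → ZMod 2) →+ ZMod 2) (x : ι → ZMod 2) :
    L x = (fun j => L (Pi.single j 1)) ⬝ᵥ x := by
  have h := LinearMap.pi_apply_eq_sum_univ (L.toZModLinearMap 2) x
  simp only [AddMonoidHom.coe_toZModLinearMap, smul_eq_mul] at h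
  rw [h, dotProduct]
  refine Finset.sum_congr rfl fun j _ => ?_
  rw [mul_comm]
  congr 2
  funext i
  simp [Pi.single_apply, eq_comm]

lemma Matrix.conj_mul_of_mem_unitaryGroup {ι R : Type*} [Fintype ι] [DecidableEq ι] [CommRing R]
    [StarRing R]
    {U : Matrix ι ι R} (hU : U ∈ unitaryGroup ι R) (P Q : Matrix ι ι R) :
    U * (P * Q) * Uᴴ = (U * P * Uᴴ) * (U * Q * Uᴴ) := by
  have h : Uᴴ * U = 1 := Unitary.star_mul_self_of_mem hU
  simp only [Matrix.mul_assoc, ← Matrix.mul_assoc Uᴴ U, h, Matrix.one_mul]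

namespace Qubit

lemma zmod_two_cases : ∀ u : ZMod 2, u = 0 ∨ u = 1 := by decide

lemma zmod_two_one_ne_zero : (1 : ZMod 2) ≠ 0 := by decide

lemma zmod_two_one_add_one : (1 + 1 : ZMod 2) = 0 := by decide

def χ : AddChar (ZMod 2) ℂ where
  toFun u := if u = 0 then 1 else -1
  map_zero_eq_one' := if_pos rfl
  map_add_eq_mul' a b := by
    rcases zmod_two_cases a with rfl | rfl <;> rcases zmod_two_cases b with rfl | rfl <;>
      simp [zmod_two_one_add_one]

lemma χ_one : χ 1 = -1 := rfl

lemma χ_mul_self (u : ZMod 2) : χ u * χ u = 1 := by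
  rw [← AddChar.map_add_eq_mul, CharTwo.add_self_eq_zero, AddChar.map_zero_eq_one]

lemma χ_ne_zero (u : ZMod 2) : χ u ≠ 0 :=
  left_ne_zero_of_mul_eq_one (χ_mul_self u)

lemma χ_injective : Function.Injective χ := by
  intro a b h
  rcases zmod_two_cases a with rfl | rfl <;> rcases zmod_two_cases b with rfl | rfl <;>
    first | rfl | norm_num [χ_one] at h

lemma star_χ (u : ZMod 2) : star (χ u) = χ u := by
  rcases zmod_two_cases u with rfl | rfl <;> simp [χ_one]

lemma prod_χ {ι : Type*} (s : Finset ι) (f : ι → ZMod 2) :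
    ∏ j ∈ s, χ (f j) = χ (∑ j ∈ s, f j) := by
  induction s using Finset.cons_induction with
  | empty => simp
  | cons j s hj ih => rw [Finset.prod_cons, Finset.sum_cons, AddChar.map_add_eq_mul, ih]

lemma eq_add_comm_iff {G : Type*} [AddCommGroup G] [Module (ZMod 2) G] {a b x : G} :
    a = b + x ↔ b = a + x := by
  constructor <;> rintro rfl <;> rw [add_assoc, ZModModule.add_self, add_zero]

variable {n : ℕ}

def symp (v w : QIdx n × QIdx n) : ZMod 2 := v.2 ⬝ᵥ w.1 + w.2 ⬝ᵥ v.1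

/-- The Weyl operator `X^x Z^z` of `v = (x, z)`. -/
noncomputable def weyl (v : QIdx n × QIdx n) : QMat n :=
  Matrix.of fun a b => if a = b + v.1 then χ (v.2 ⬝ᵥ b) else 0

lemma weyl_apply_add (v : QIdx n × QIdx n) (b : QIdx n) :
    weyl v (b + v.1) b = χ (v.2 ⬝ᵥ b) := if_pos rfl

@[simp]
lemma weyl_zero : weyl (0 : QIdx n × QIdx n) = 1 := by
  ext a b
  simp [weyl, one_apply]

lemma weyl_mul (v w : QIdx n × QIdx n) :
    weyl v * weyl w = χ (v.2 ⬝ᵥ w.1) • weyl (v + w) := by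
  ext a c
  simp only [mul_apply, weyl, of_apply, Matrix.smul_apply, smul_eq_mul, Prod.fst_add, Prod.snd_add]
  rw [Finset.sum_eq_single (c + w.1) (fun b _ hb => by rw [if_neg hb, mul_zero])
    (fun h => absurd (Finset.mem_univ _) h), if_pos rfl, add_assoc, add_comm w.1]
  by_cases h : a = c + (v.1 + w.1)
  · rw [if_pos h, if_pos h, dotProduct_add, add_dotProduct, AddChar.map_add_eq_mul,
      AddChar.map_add_eq_mul]
    ring
  · rw [if_neg h, if_neg h, zero_mul, mul_zero]

lemma conjTranspose_weyl (v : QIdx n × QIdx n) :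
    (weyl v)ᴴ = χ (v.2 ⬝ᵥ v.1) • weyl v := by
  ext a b
  simp only [conjTranspose_apply, weyl, of_apply, Matrix.smul_apply, smul_eq_mul]
  by_cases h : a = b + v.1
  · rw [if_pos (eq_add_comm_iff.mp h), if_pos h, star_χ, h, dotProduct_add,
      AddChar.map_add_eq_mul]
    ring
  · rw [if_neg (fun hb => h (eq_add_comm_iff.mpr hb)), if_neg h, mul_zero, star_zero]

lemma weyl_mul_self (v : QIdx n × QIdx n) :
    weyl v * weyl v = χ (v.2 ⬝ᵥ v.1) • (1 : QMat n) := by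
  rw [weyl_mul, ZModModule.add_self, weyl_zero]

lemma weyl_mul_conjTranspose_self (v : QIdx n × QIdx n) : weyl v * (weyl v)ᴴ = 1 := by
  rw [conjTranspose_weyl, Matrix.mul_smul, weyl_mul_self, smul_smul, χ_mul_self, one_smul]

lemma conjTranspose_weyl_mul_self (v : QIdx n × QIdx n) : (weyl v)ᴴ * weyl v = 1 := by
  rw [conjTranspose_weyl, Matrix.smul_mul, weyl_mul_self, smul_smul, χ_mul_self, one_smul]

lemma weyl_mul_comm (v w : QIdx n × QIdx n) :
    weyl v * weyl w = χ (symp v w) • (weyl w * weyl v) := by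
  rw [weyl_mul, weyl_mul, smul_smul, symp, AddChar.map_add_eq_mul, add_comm w v, mul_assoc,
    χ_mul_self, mul_one]

lemma weyl_conj_weyl (u v : QIdx n × QIdx n) :
    weyl u * weyl v * (weyl u)ᴴ = χ (symp u v) • weyl v := by
  rw [weyl_mul_comm u v, Matrix.smul_mul, Matrix.mul_assoc, weyl_mul_conjTranspose_self,
    Matrix.mul_one]

lemma weyl_add (v w : QIdx n × QIdx n) :
    weyl (v + w) = χ (v.2 ⬝ᵥ w.1) • (weyl v * weyl w) := by
  rw [weyl_mul, smul_smul, χ_mul_self, one_smul]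

lemma eq_and_eq_of_smul_weyl_eq {c d : ℂ} {v w : QIdx n × QIdx n} (hc : c ≠ 0)
    (h : c • weyl v = d • weyl w) : c = d ∧ v = w := by
  have hentry : ∀ a b, c * weyl v a b = d * weyl w a b := fun a b => by
    simpa using congrFun (congrFun h a) b
  have hx : v.1 = w.1 := by
    by_contra hne
    have h0 := hentry (0 + v.1) 0
    rw [weyl_apply_add, show weyl w (0 + v.1) 0 = 0 by simp [weyl, hne], mul_zero] at h0
    exact mul_ne_zero hc (χ_ne_zero _) h0
  have hdiag : ∀ b : QIdx n, c * χ (v.2 ⬝ᵥ b) = d * χ (w.2 ⬝ᵥ b) := fun b => by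
    have h := hentry (b + v.1) b
    rwa [weyl_apply_add, hx, weyl_apply_add] at h
  have hcd : c = d := by simpa using hdiag 0
  subst hcd
  refine ⟨rfl, Prod.ext hx (funext fun j => χ_injective (mul_left_cancel₀ hc ?_))⟩
  simpa [dotProduct_single] using hdiag (Pi.single j 1)

lemma mul_weyl_apply (M : QMat n) (v : QIdx n × QIdx n) (a b : QIdx n) :
    (M * weyl v) a b = M a (b + v.1) * χ (v.2 ⬝ᵥ b) := by
  rw [mul_apply, Finset.sum_eq_single (b + v.1) (fun c _ hc => by simp [weyl, hc])
    (fun h => absurd (Finset.mem_univ _) h), weyl_apply_add]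

lemma weyl_mul_apply (v : QIdx n × QIdx n) (M : QMat n) (a b : QIdx n) :
    (weyl v * M) a b = χ (v.2 ⬝ᵥ (a + v.1)) * M (a + v.1) b := by
  rw [mul_apply, Finset.sum_eq_single (a + v.1)
    (fun c _ hc => by simp [weyl, show a ≠ c + v.1 from fun h => hc (eq_add_comm_iff.mp h)])
    (fun h => absurd (Finset.mem_univ _) h)]
  simp [weyl, ← eq_add_comm_iff.mpr rfl]

lemma eq_smul_one_of_forall_commute_weyl {M : QMat n} (h : ∀ v, M * weyl v = weyl v * M) :
    ∃ c : ℂ, M = c • (1 : QMat n) := by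
  have hoff : ∀ a b : QIdx n, a ≠ b → M a b = 0 := by
    intro a b hab
    obtain ⟨j, hj⟩ := Function.ne_iff.mp hab
    have hZ := congrFun (congrFun (h (0, Pi.single j 1)) a) b
    simp only [mul_weyl_apply, weyl_mul_apply, add_zero, single_dotProduct, one_mul] at hZ
    by_contra hM
    exact hj (χ_injective (mul_left_cancel₀ hM (hZ.trans (mul_comm _ _))).symm)
  have hdiag : ∀ a b : QIdx n, M a a = M b b := by
    intro a b
    have hX := congrFun (congrFun (h (a + b, 0)) a) b
    have hb : b + (a + b) = a := by rw [add_left_comm, ZModModule.add_self, add_zero]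
    have ha : a + (a + b) = b := by rw [← add_assoc, ZModModule.add_self, zero_add]
    simpa [mul_weyl_apply, weyl_mul_apply, ha, hb] using hX
  refine ⟨M 0 0, ext fun a b => ?_⟩
  by_cases hab : a = b
  · subst hab; simp [hdiag a 0]
  · simp [hoff a b hab, hab]

noncomputable def weyl₁ (x z : ZMod 2) : Matrix (ZMod 2) (ZMod 2) ℂ :=
  Matrix.of fun a b => if a = b + x then χ (z * b) else 0

lemma weyl_apply_eq_prod (v : QIdx n × QIdx n) (a b : QIdx n) :
    weyl v a b = ∏ j, weyl₁ (v.1 j) (v.2 j) (a j) (b j) := by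
  simp only [weyl, weyl₁, of_apply]
  by_cases h : a = b + v.1
  · have hj : ∀ j, a j = b j + v.1 j := fun j => congrFun h j
    rw [if_pos h, Finset.prod_congr rfl fun j _ => if_pos (hj j), prod_χ]
    rfl
  · obtain ⟨j, hj⟩ := Function.ne_iff.mp h
    rw [if_neg h, eq_comm]
    exact Finset.prod_eq_zero (Finset.mem_univ j) (if_neg hj)

lemma weyl₁_zero_zero : weyl₁ 0 0 = 1 := by
  ext a b
  rcases zmod_two_cases a with rfl | rfl <;> rcases zmod_two_cases b with rfl | rfl <;>
    simp [weyl₁, one_apply]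

lemma weyl₁_one_zero : weyl₁ 1 0 = pauliX := by
  ext a b
  rcases zmod_two_cases a with rfl | rfl <;> rcases zmod_two_cases b with rfl | rfl <;>
    simp [weyl₁, pauliX, zmod_two_one_add_one, zmod_two_one_ne_zero.symm]

lemma weyl₁_zero_one : weyl₁ 0 1 = pauliZ := by
  ext a b
  rcases zmod_two_cases a with rfl | rfl <;> rcases zmod_two_cases b with rfl | rfl <;>
    simp [weyl₁, pauliZ, χ_one, zmod_two_one_ne_zero.symm]

lemma weyl₁_one_one : weyl₁ 1 1 = (-Complex.I) • pauliY := by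
  ext a b
  rcases zmod_two_cases a with rfl | rfl <;> rcases zmod_two_cases b with rfl | rfl <;>
    simp [weyl₁, pauliY, χ_one, zmod_two_one_ne_zero.symm, zmod_two_one_add_one]

lemma weyl_mem_pauliGroup (v : QIdx n × QIdx n) : weyl v ∈ PauliGroup n := by
  classical
  let isY : Fin n → Prop := fun j => v.1 j = 1 ∧ v.2 j = 1
  refine ⟨∏ j, (if isY j then -Complex.I else 1),
    fun j => if isY j then pauliY else weyl₁ (v.1 j) (v.2 j), ?_, fun j => ?_, ?_⟩
  · refine Finset.prod_induction _ (fun ω => ω = 1 ∨ ω = -1 ∨ ω = Complex.I ∨ ω = -Complex.I)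
      ?_ (Or.inl rfl) fun j _ => ?_
    · rintro x y (rfl | rfl | rfl | rfl) (rfl | rfl | rfl | rfl) <;> simp
    · by_cases h : isY j <;> simp [h]
  · by_cases h : isY j
    · simp [h]
    · simp only [if_neg h]
      rcases zmod_two_cases (v.1 j) with h1 | h1 <;> rcases zmod_two_cases (v.2 j) with h2 | h2
      · simp [h1, h2, weyl₁_zero_zero]
      · simp [h1, h2, weyl₁_zero_one]
      · simp [h1, h2, weyl₁_one_zero]
      · exact absurd ⟨h1, h2⟩ h
  · ext a b
    simp only [weyl_apply_eq_prod, Matrix.smul_apply, of_apply, smul_eq_mul,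
      ← Finset.prod_mul_distrib]
    refine Finset.prod_congr rfl fun j _ => ?_
    by_cases h : isY j
    · rw [if_pos h, if_pos h, h.1, h.2, weyl₁_one_one]; simp
    · simp [h]

lemma exists_eq_smul_weyl_of_mem_pauliGroup {M : QMat n} (hM : M ∈ PauliGroup n) :
    ∃ (c : ℂ) (v : QIdx n × QIdx n), c ≠ 0 ∧ M = c • weyl v := by
  obtain ⟨ω, P, hω, hP, rfl⟩ := hM
  have hfactor : ∀ j, ∃ d : ℂ × ZMod 2 × ZMod 2, d.1 ≠ 0 ∧ P j = d.1 • weyl₁ d.2.1 d.2.2 := by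
    intro j
    rcases hP j with h | h | h | h
    · exact ⟨(1, 0, 0), one_ne_zero, by rw [h, weyl₁_zero_zero, one_smul]⟩
    · exact ⟨(1, 1, 0), one_ne_zero, by rw [h, weyl₁_one_zero, one_smul]⟩
    · exact ⟨(Complex.I, 1, 1), Complex.I_ne_zero, by simp [h, weyl₁_one_one, smul_smul]⟩
    · exact ⟨(1, 0, 1), one_ne_zero, by rw [h, weyl₁_zero_one, one_smul]⟩
  choose d hd0 hd using hfactor
  have hω0 : ω ≠ 0 := by rcases hω with rfl | rfl | rfl | rfl <;> simp
  refine ⟨ω * ∏ j, (d j).1, (fun j => (d j).2.1, fun j => (d j).2.2),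
    mul_ne_zero hω0 (Finset.prod_ne_zero_iff.mpr fun j _ => hd0 j), ?_⟩
  ext a b
  simp only [Matrix.smul_apply, of_apply, smul_eq_mul, weyl_apply_eq_prod, hd, mul_assoc,
    Finset.prod_mul_distrib]

lemma exists_eq_χ_symp (ψ : AddChar (QIdx n × QIdx n) ℂ) :
    ∃ w : QIdx n × QIdx n, ∀ v, ψ v = χ (symp w v) := by
  have hsign : ∀ v, ∃ u, ψ v = χ u := fun v => by
    have hsq : ψ v * ψ v = 1 := by
      rw [← AddChar.map_add_eq_mul, ZModModule.add_self, AddChar.map_zero_eq_one]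
    rcases mul_self_eq_one_iff.mp hsq with h | h
    · exact ⟨0, by rw [h, AddChar.map_zero_eq_one]⟩
    · exact ⟨1, by rw [h, χ_one]⟩
  choose L hL using hsign
  let L' : (QIdx n × QIdx n) →+ ZMod 2 := AddMonoidHom.mk' L fun v w => χ_injective <| by
    rw [← hL, AddChar.map_add_eq_mul, hL, hL, AddChar.map_add_eq_mul]
  refine ⟨(fun j => L (0, Pi.single j 1), fun j => L (Pi.single j 1, 0)), fun v => ?_⟩
  rw [hL]
  congr 1
  calc L v = L' ((v.1, 0) + (0, v.2)) := by simp [L']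
    _ = (L'.comp (AddMonoidHom.inl _ _)) v.1 + (L'.comp (AddMonoidHom.inr _ _)) v.2 := map_add _ _ _
    _ = _ := by
      rw [AddMonoidHom.apply_eq_dotProduct, AddMonoidHom.apply_eq_dotProduct, symp,
        dotProduct_comm v.2]
      rfl

lemma eq_smul_weyl_of_forall_conj_eq {V : QMat n} {w : QIdx n × QIdx n}
    (hV : V ∈ unitaryGroup (QIdx n) ℂ)
    (h : ∀ v, V * weyl v * Vᴴ = weyl w * weyl v * (weyl w)ᴴ) : ∃ c : ℂ, V = c • weyl w := by
  have hVV : Vᴴ * V = 1 := Unitary.star_mul_self_of_mem hV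
  have hcomm : ∀ v, ((weyl w)ᴴ * V) * weyl v = weyl v * ((weyl w)ᴴ * V) := fun v => by
    calc (weyl w)ᴴ * V * weyl v = (weyl w)ᴴ * (V * weyl v * Vᴴ) * V := by
          simp only [Matrix.mul_assoc, hVV, Matrix.mul_one]
      _ = ((weyl w)ᴴ * weyl w) * weyl v * ((weyl w)ᴴ * V) := by
          rw [h v]; simp only [Matrix.mul_assoc]
      _ = weyl v * ((weyl w)ᴴ * V) := by rw [conjTranspose_weyl_mul_self, Matrix.one_mul]
  obtain ⟨c, hc⟩ := eq_smul_one_of_forall_commute_weyl hcomm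
  refine ⟨c, ?_⟩
  calc V = weyl w * ((weyl w)ᴴ * V) := by
        rw [← Matrix.mul_assoc, weyl_mul_conjTranspose_self, Matrix.one_mul]
    _ = c • weyl w := by rw [hc, Matrix.mul_smul, Matrix.mul_one]

lemma norm_eq_one_of_smul_weyl_mem_unitaryGroup {c : ℂ} {w : QIdx n × QIdx n}
    (h : c • weyl w ∈ unitaryGroup (QIdx n) ℂ) : ‖c‖ = 1 := by
  have h1 := Unitary.star_mul_self_of_mem h
  rw [star_eq_conjTranspose, conjTranspose_smul, Matrix.smul_mul, Matrix.mul_smul,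
    conjTranspose_weyl_mul_self, smul_smul] at h1
  have h2 : star c * c = 1 := by simpa using congrFun (congrFun h1 0) 0
  rw [Complex.star_def, Complex.conj_mul'] at h2
  exact (pow_eq_one_iff_of_nonneg (norm_nonneg c) two_ne_zero).mp (by exact_mod_cast h2)

def ConjMapsWeyl (U : QMat n) (f : QIdx n × QIdx n → QIdx n × QIdx n) : Prop :=
  ∀ v, ∃ c : ℂ, c ≠ 0 ∧ U * weyl v * Uᴴ = c • weyl (f v)

lemma conjMapsWeyl_weyl (u : QIdx n × QIdx n) : ConjMapsWeyl (weyl u) id :=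
  fun v => ⟨χ (symp u v), χ_ne_zero _, weyl_conj_weyl u v⟩

namespace ConjMapsWeyl

variable {U V : QMat n} {f g : QIdx n × QIdx n → QIdx n × QIdx n}

lemma unique (hf : ConjMapsWeyl U f) (hg : ConjMapsWeyl U g) : f = g := funext fun v => by
  obtain ⟨c, hc, hcv⟩ := hf v
  obtain ⟨d, -, hdv⟩ := hg v
  exact (eq_and_eq_of_smul_weyl_eq hc (hcv.symm.trans hdv)).2

lemma smul {c : ℂ} (hc : c ≠ 0) (hf : ConjMapsWeyl U f) : ConjMapsWeyl (c • U) f := fun v => by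
  obtain ⟨d, hd, hdv⟩ := hf v
  refine ⟨star c * c * d, by simp [hc, hd], ?_⟩
  rw [conjTranspose_smul, Matrix.smul_mul, Matrix.mul_smul, Matrix.smul_mul, hdv, smul_smul,
    smul_smul]

lemma mul (hf : ConjMapsWeyl U f) (hg : ConjMapsWeyl V g) : ConjMapsWeyl (U * V) (f ∘ g) :=
  fun v => by
    obtain ⟨d, hd, hdv⟩ := hg v
    obtain ⟨c, hc, hcv⟩ := hf (g v)
    refine ⟨d * c, mul_ne_zero hd hc, ?_⟩
    calc U * V * weyl v * (U * V)ᴴ = U * (V * weyl v * Vᴴ) * Uᴴ := by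
          simp only [conjTranspose_mul, Matrix.mul_assoc]
      _ = (d * c) • weyl (f (g v)) := by
          rw [hdv, Matrix.mul_smul, Matrix.smul_mul, hcv, smul_smul]

lemma pow (hf : ConjMapsWeyl U f) (k : ℕ) : ConjMapsWeyl (U ^ k) f^[k] := by
  induction k with
  | zero => exact fun v => ⟨1, one_ne_zero, by simp⟩
  | succ k ih => rw [pow_succ', Function.iterate_succ']; exact hf.mul ih

lemma map_add (hU : U ∈ unitaryGroup (QIdx n) ℂ) (hf : ConjMapsWeyl U f)
    (v w : QIdx n × QIdx n) :
    f (v + w) = f v + f w := by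
  obtain ⟨c, -, hcv⟩ := hf v
  obtain ⟨d, -, hdw⟩ := hf w
  obtain ⟨e, he, hevw⟩ := hf (v + w)
  have hsum : U * weyl (v + w) * Uᴴ
      = (χ (v.2 ⬝ᵥ w.1) * c * d * χ ((f v).2 ⬝ᵥ (f w).1)) • weyl (f v + f w) := by
    rw [weyl_add, Matrix.mul_smul, Matrix.smul_mul, conj_mul_of_mem_unitaryGroup hU, hcv, hdw,
      Matrix.smul_mul, Matrix.mul_smul, weyl_mul, smul_smul, smul_smul, smul_smul]
  exact (eq_and_eq_of_smul_weyl_eq he (hevw.symm.trans hsum)).2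

lemma exists_forall_conj_eq (hV : V ∈ unitaryGroup (QIdx n) ℂ) (h : ConjMapsWeyl V id) :
    ∃ w : QIdx n × QIdx n, ∀ v, V * weyl v * Vᴴ = weyl w * weyl v * (weyl w)ᴴ := by
  choose ε hε0 hε using h
  have hVV : V * Vᴴ = 1 := Unitary.mul_star_self_of_mem hV
  let ψ : AddChar (QIdx n × QIdx n) ℂ :=
    { toFun := ε
      map_zero_eq_one' := by
        have h0 : V * weyl 0 * Vᴴ = (1 : ℂ) • weyl 0 := by simp [hVV]
        exact (eq_and_eq_of_smul_weyl_eq (hε0 0) ((hε 0).symm.trans h0)).1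
      map_add_eq_mul' := fun v w => by
        have hvw : V * weyl (v + w) * Vᴴ = (ε v * ε w) • weyl (v + w) := by
          rw [weyl_add, Matrix.mul_smul, Matrix.smul_mul, conj_mul_of_mem_unitaryGroup hV, hε v,
            hε w, Matrix.smul_mul, Matrix.mul_smul, smul_smul, smul_smul, smul_smul, id, id]
          ring_nf
        exact (eq_and_eq_of_smul_weyl_eq (hε0 (v + w)) ((hε (v + w)).symm.trans hvw)).1 }
  obtain ⟨w, hw⟩ := exists_eq_χ_symp ψ
  exact ⟨w, fun v => by rw [hε v, weyl_conj_weyl, ← hw]; rfl⟩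

lemma isPauliUpToPhase (hV : V ∈ unitaryGroup (QIdx n) ℂ) (h : ConjMapsWeyl V id) :
    IsPauliUpToPhase n V := by
  obtain ⟨w, hw⟩ := h.exists_forall_conj_eq hV
  obtain ⟨c, rfl⟩ := eq_smul_weyl_of_forall_conj_eq hV hw
  exact ⟨c, weyl w, norm_eq_one_of_smul_weyl_mem_unitaryGroup hV, weyl_mem_pauliGroup w, rfl⟩

end ConjMapsWeyl

lemma mem_cLevel_two {U : QMat n} :
    U ∈ CLevel n 2 ↔ U ∈ unitaryGroup (QIdx n) ℂ ∧ ∀ P ∈ PauliGroup n, U * P * Uᴴ ∈ PauliGroup n :=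
  Iff.rfl

lemma exists_conjMapsWeyl_of_mem_cLevel_two {U : QMat n} (hU : U ∈ CLevel n 2) :
    ∃ f : Module.End (ZMod 2) (QIdx n × QIdx n), ConjMapsWeyl U f := by
  obtain ⟨hUu, hUc⟩ := mem_cLevel_two.mp hU
  choose c f hc hf using fun v =>
    exists_eq_smul_weyl_of_mem_pauliGroup (hUc _ (weyl_mem_pauliGroup v))
  have hconj : ConjMapsWeyl U f := fun v => ⟨c v, hc v, hf v⟩
  exact ⟨(AddMonoidHom.mk' f (hconj.map_add hUu)).toZModLinearMap 2, hconj⟩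

lemma IsPauliUpToPhase.conjMapsWeyl_id {P : QMat n} (h : IsPauliUpToPhase n P) :
    ConjMapsWeyl P id := by
  obtain ⟨c, Q, hc, hQ, rfl⟩ := h
  obtain ⟨d, u, hd, rfl⟩ := exists_eq_smul_weyl_of_mem_pauliGroup hQ
  exact ((conjMapsWeyl_weyl u).smul hd).smul (norm_ne_zero_iff.mp (hc ▸ one_ne_zero))

end Qubit

open Qubit

theorem pauli_periodicity_upper_bound_general (n m : ℕ)
    (U : QMat n) (hU : U ∈ CLevel n 2) (hper : HasPauliPeriodicity n m U) :
    m ≤ Nat.clog 2 (2 * n) := by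
  obtain ⟨f, hf⟩ := exists_conjMapsWeyl_of_mem_cLevel_two hU
  have hfm : f ^ 2 ^ m = 1 := by
    refine LinearMap.ext fun v => ?_
    have h := congrFun ((hf.pow (2 ^ m)).unique hper.1.conjMapsWeyl_id) v
    rwa [← Module.End.coe_pow] at h
  have hrank : Module.finrank (ZMod 2) (QIdx n × QIdx n) = 2 * n := by
    rw [Module.finrank_prod, Module.finrank_fin_fun]; ring
  have hft := Module.End.pow_char_pow_clog_finrank_eq_one 2 hfm
  rw [hrank] at hft
  by_contra! hlt
  have hid : ConjMapsWeyl (U ^ 2 ^ Nat.clog 2 (2 * n)) id := by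
    have h := hf.pow (2 ^ Nat.clog 2 (2 * n))
    rwa [← Module.End.coe_pow, hft] at h
  exact hper.2 _ hlt (hid.isPauliUpToPhase (pow_mem (mem_cLevel_two.mp hU).1 _))

/-- Upper bound on Pauli periodicity: an `n`-qubit Clifford with
Pauli periodicity `m` satisfies `m ≤ ⌈log₂(2n)⌉`. -/
theorem pauli_periodicity_upper_bound (n m : ℕ) (hn : 1 ≤ n)
    (U : QMat n) (hU : U ∈ CLevel n 2) (hper : HasPauliPeriodicity n m U) :
    m ≤ Nat.clog 2 (2 * n) :=
  pauli_periodicity_upper_bound_general n m U hU hper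
end

section
/- Tightness of the Pauli-periodicity bound: For every integer n > 1 there exists an n-qubit Clifford unitary U ∈ 𝒞_2^{(n)} whose Pauli periodicity is exactly ⌈log₂(2n)⌉; that is, U^{2^{⌈log₂(2n)⌉}} lies in 𝒫_n up to a global phase, while U^{2^t} does not lie in 𝒫_n up to a global phase for any 0 ≤ t < ⌈log₂(2n)⌉. -/
open Matrix

/-!
The witness is `U |y⟩ = i^{y₀} |J y⟩`, where `J = 1 + N` is the unipotent `n × n` Jordan block
over `𝔽₂`: an `S` gate followed by a CNOT circuit, hence a Clifford. Its powers are
`U^k |y⟩ = i^{S_k(y)} |J^k y⟩` with `S_k(y) = ∑_{j<k} (J^j y)₀`, whereas a Pauli up to phase sends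
`|y⟩` to a multiple of `|y + v⟩`. Let `a = ⌈log₂ n⌉`, so that `⌈log₂ 2n⌉ = a + 1`.

In characteristic `2`, `J^{2^t} = 1 + N^{2^t}`, which is the identity iff `n ≤ 2^t`; so `U^{2^t}` is
not Pauli for `t < a`. The matrix `U^{2^a}` is diagonal, and if it were Pauli then
`y ↦ i^{S(y)}` would be a character of `𝔽₂ⁿ`. But
`i^{S(x+y)} = i^{S(x)} i^{S(y)} (-1)^{B(x,y)}` with `B(x,y) = ∑_{j<2^a} (J^j x)₀ (J^j y)₀`, and
`(J^j)₀ₗ = C(j,l)` gives `B(e_{2^{a-1}}, e_{2^{a-1}-1}) = ∑_j C(j, 2^{a-1}) C(j, 2^{a-1}-1)`,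
which is odd: the only odd term is `j = 2^a - 1`. Finally `U^{2^{a+1}}` is diagonal with entries
`i^{2 S(y)} = (-1)^{S(y)}`, and `S(y)` is linear in `y` modulo `2`, so it is a `Z`-type Pauli.
-/

open Complex Finset

lemma AddChar.map_sum_eq_prod {ι A M : Type*} [AddCommMonoid A] [CommMonoid M] (ψ : AddChar A M)
    (s : Finset ι) (f : ι → A) : ψ (∑ i ∈ s, f i) = ∏ i ∈ s, ψ (f i) := by
  classical
  induction s using Finset.induction_on with
  | empty => simp
  | insert i s hi ih => rw [sum_insert hi, AddChar.map_add_eq_mul, ih, prod_insert hi]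

lemma zmod_two_cases (u : ZMod 2) : u = 0 ∨ u = 1 := by
  revert u
  decide

noncomputable def signChar : AddChar (ZMod 2) ℂ :=
  AddChar.zmodChar 2 (by norm_num : (-1 : ℂ) ^ 2 = 1)

lemma signChar_apply (u : ZMod 2) : signChar u = (-1) ^ u.val := AddChar.zmodChar_apply _ u

lemma signChar_ne_zero (u : ZMod 2) : signChar u ≠ 0 := by
  rw [signChar_apply]
  exact pow_ne_zero _ (by norm_num)

lemma signChar_eq_one_iff (u : ZMod 2) : signChar u = 1 ↔ u = 0 := by
  rcases zmod_two_cases u with rfl | rfl <;> norm_num [signChar_apply, ZMod.val_one]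

lemma I_pow_val_sq (u : ZMod 2) : (I ^ u.val) ^ 2 = signChar u := by
  rw [← pow_mul, mul_comm, pow_mul, I_sq, signChar_apply]

lemma I_pow_val_add (u v : ZMod 2) :
    I ^ (u + v).val = I ^ u.val * I ^ v.val * signChar (u * v) := by
  rcases zmod_two_cases u with rfl | rfl <;> rcases zmod_two_cases v with rfl | rfl <;>
    norm_num [signChar_apply, ZMod.val_one, show ZMod.val (2 : ZMod 2) = 0 from rfl]

lemma star_I_pow_mul_self (m : ℕ) : star (I ^ m) * I ^ m = 1 := by
  rw [star_pow, ← mul_pow, Complex.star_def, conj_I, neg_mul, I_mul_I, neg_neg, one_pow]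

section Monomial

variable {ι R : Type*} [DecidableEq ι]

def monomialMatrix [Zero R] (f : ι → ι) (φ : ι → R) : Matrix ι ι R :=
  Matrix.of fun x y => if x = f y then φ y else 0

@[simp] lemma monomialMatrix_apply [Zero R] (f : ι → ι) (φ : ι → R) (x y : ι) :
    monomialMatrix f φ x y = if x = f y then φ y else 0 := rfl

lemma monomialMatrix_id [Zero R] (φ : ι → R) : monomialMatrix id φ = Matrix.diagonal φ := by
  ext x y
  by_cases h : x = y <;> simp [h]

lemma smul_monomialMatrix [MulZeroClass R] (c : R) (f : ι → ι) (φ : ι → R) :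
    c • monomialMatrix f φ = monomialMatrix f (fun y => c * φ y) := by
  ext x y
  by_cases h : x = f y <;> simp [h]

lemma monomialMatrix_eq_iff [Zero R] {f g : ι → ι} {φ ψ : ι → R} (hφ : ∀ y, φ y ≠ 0) :
    monomialMatrix f φ = monomialMatrix g ψ ↔ f = g ∧ φ = ψ := by
  refine ⟨fun h => ?_, fun h => h.1 ▸ h.2 ▸ rfl⟩
  have key (y : ι) : φ y = if f y = g y then ψ y else 0 := by
    simpa using congrFun (congrFun h (f y)) y
  have hfg (y : ι) : f y = g y := by
    by_contra hne
    exact hφ y (by simpa [hne] using key y)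
  exact ⟨funext hfg, funext fun y => by simpa [hfg y] using key y⟩

variable [Fintype ι]

lemma monomialMatrix_mul [NonUnitalNonAssocSemiring R] (f g : ι → ι) (φ ψ : ι → R) :
    monomialMatrix f φ * monomialMatrix g ψ = monomialMatrix (f ∘ g) (fun y => φ (g y) * ψ y) := by
  ext x y
  simp [Matrix.mul_apply, ite_mul, mul_ite]

lemma monomialMatrix_pow [CommSemiring R] (f : ι → ι) (φ : ι → R) (k : ℕ) :
    monomialMatrix f φ ^ k = monomialMatrix f^[k] (fun y => ∏ j ∈ range k, φ (f^[j] y)) := by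
  induction k with
  | zero => simp [monomialMatrix_id]
  | succ k ih =>
    rw [pow_succ', ih, monomialMatrix_mul, ← Function.iterate_succ']
    simp only [prod_range_succ, mul_comm]

lemma monomialMatrix_mem_unitaryGroup [CommRing R] [StarRing R] {f : ι → ι} (hf : f.Injective)
    {φ : ι → R} (hφ : ∀ y, star (φ y) * φ y = 1) :
    monomialMatrix f φ ∈ Matrix.unitaryGroup ι R := by
  rw [Matrix.mem_unitaryGroup_iff', Matrix.star_eq_conjTranspose]
  ext x y
  by_cases h : x = y
  · subst h
    simp [Matrix.mul_apply, hφ]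
  · simp [Matrix.mul_apply, h, hf.eq_iff, Ne.symm h]

end Monomial

section Pauli

variable {n : ℕ}

/-- `pauli1 v w = i^{vw} X^v Z^w`. -/
noncomputable def pauli1 (v w : ZMod 2) : Matrix (ZMod 2) (ZMod 2) ℂ :=
  monomialMatrix (· + v) fun b => I ^ (v.val * w.val) * signChar (w * b)

lemma pauli1_eq_paulis : pauli1 0 0 = 1 ∧ pauli1 1 0 = pauliX ∧ pauli1 1 1 = pauliY ∧
    pauli1 0 1 = pauliZ := by
  refine ⟨?_, ?_, ?_, ?_⟩ <;> ext a b <;>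
    rcases zmod_two_cases a with rfl | rfl <;> rcases zmod_two_cases b with rfl | rfl <;>
    simp [pauli1, pauliX, pauliY, pauliZ, signChar_apply, ZMod.val_one,
      show (1 + 1 : ZMod 2) = 0 from rfl]

lemma exists_eq_pauli1_iff (P : Matrix (ZMod 2) (ZMod 2) ℂ) :
    (∃ v w, P = pauli1 v w) ↔ P = 1 ∨ P = pauliX ∨ P = pauliY ∨ P = pauliZ := by
  obtain ⟨h00, h10, h11, h01⟩ := pauli1_eq_paulis
  constructor
  · rintro ⟨v, w, rfl⟩
    rcases zmod_two_cases v with rfl | rfl <;> rcases zmod_two_cases w with rfl | rfl <;>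
      simp [h00, h10, h11, h01]
  · rintro (rfl | rfl | rfl | rfl)
    exacts [⟨0, 0, h00.symm⟩, ⟨1, 0, h10.symm⟩, ⟨1, 1, h11.symm⟩, ⟨0, 1, h01.symm⟩]

lemma exists_eq_I_pow_iff (ω : ℂ) : (∃ m : ℕ, ω = I ^ m) ↔ ω = 1 ∨ ω = -1 ∨ ω = I ∨ ω = -I := by
  constructor
  · rintro ⟨m, rfl⟩
    rw [I_pow_eq_pow_mod]
    have : m % 4 < 4 := Nat.mod_lt _ (by norm_num)
    interval_cases m % 4 <;> simp [pow_succ]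
  · rintro (rfl | rfl | rfl | rfl)
    exacts [⟨0, rfl⟩, ⟨2, I_sq.symm⟩, ⟨1, (pow_one I).symm⟩, ⟨3, I_pow_three.symm⟩]

/-- `pauliMonomial k v w = i^k X^v Z^w`. -/
noncomputable def pauliMonomial (k : ℕ) (v w : QIdx n) : QMat n :=
  monomialMatrix (· + v) fun y => I ^ k * signChar (w ⬝ᵥ y)

lemma I_pow_smul_pauliMonomial (m k : ℕ) (v w : QIdx n) :
    I ^ m • pauliMonomial k v w = pauliMonomial (m + k) v w := by
  simp only [pauliMonomial, smul_monomialMatrix, pow_add, mul_assoc]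

lemma of_prod_pauli1_eq_pauliMonomial (v w : QIdx n) :
    Matrix.of (fun a b => ∏ j, pauli1 (v j) (w j) (a j) (b j)) =
      pauliMonomial (∑ j, (v j).val * (w j).val) v w := by
  ext a b
  simp only [Matrix.of_apply, pauli1, monomialMatrix_apply, pauliMonomial, prod_ite_zero,
    prod_mul_distrib, prod_pow_eq_pow_sum, ← AddChar.map_sum_eq_prod, dotProduct, mem_univ,
    true_implies, funext_iff, Pi.add_apply]

lemma mem_pauliGroup_iff {M : QMat n} : M ∈ PauliGroup n ↔ ∃ k v w, M = pauliMonomial k v w := by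
  simp only [PauliGroup, Set.mem_ofPred_eq, ← exists_eq_I_pow_iff, ← exists_eq_pauli1_iff]
  constructor
  · rintro ⟨ω, P, ⟨m, rfl⟩, hP, rfl⟩
    choose v w hP using hP
    exact ⟨_, v, w, by rw [funext hP, of_prod_pauli1_eq_pauliMonomial, I_pow_smul_pauliMonomial]⟩
  · rintro ⟨k, v, w, rfl⟩
    set s := ∑ j, (v j).val * (w j).val
    refine ⟨_, fun j => pauli1 (v j) (w j), ⟨k + 3 * s, rfl⟩, fun j => ⟨_, _, rfl⟩, ?_⟩
    have hI : I ^ (k + 3 * s + s) = I ^ k := by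
      rw [show k + 3 * s + s = k + 4 * s by ring, pow_add, pow_mul, I_pow_four, one_pow, mul_one]
    rw [of_prod_pauli1_eq_pauliMonomial, I_pow_smul_pauliMonomial, pauliMonomial, pauliMonomial, hI]

end Pauli

lemma Matrix.mulVec_iterate {ι R : Type*} [Fintype ι] [DecidableEq ι] [CommSemiring R]
    (A : Matrix ι ι R) (k : ℕ) : (A *ᵥ ·)^[k] = ((A ^ k) *ᵥ ·) := by
  induction k with
  | zero => funext y; simp
  | succ k ih => rw [Function.iterate_succ', ih, pow_succ']; funext y; simp [Matrix.mulVec_mulVec]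

section LinearPhaseGate

variable {n : ℕ} [NeZero n] (A : Matrix (Fin n) (Fin n) (ZMod 2))

/-- `|y⟩ ↦ i^{y₀} |A y⟩`: the phase gate `S` on qubit `0` followed by the CNOT circuit `A`. -/
noncomputable def linearPhaseGate : QMat n :=
  monomialMatrix (A *ᵥ ·) fun y => I ^ (y 0).val

noncomputable def gatePhase (k : ℕ) (y : QIdx n) : ℂ :=
  ∏ j ∈ range k, I ^ (((A ^ j) *ᵥ y) 0).val

lemma linearPhaseGate_pow (k : ℕ) :
    linearPhaseGate A ^ k = monomialMatrix ((A ^ k) *ᵥ ·) (gatePhase A k) := by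
  simp only [linearPhaseGate, monomialMatrix_pow, Matrix.mulVec_iterate]
  rfl

lemma gatePhase_ne_zero (k : ℕ) (y : QIdx n) : gatePhase A k y ≠ 0 :=
  prod_ne_zero_iff.mpr fun _ _ => pow_ne_zero _ I_ne_zero

@[simp] lemma gatePhase_zero_right (k : ℕ) : gatePhase A k 0 = 1 := by
  simp [gatePhase]

lemma gatePhase_add (k : ℕ) (x y : QIdx n) :
    gatePhase A k (x + y) = gatePhase A k x * gatePhase A k y *
      signChar (∑ j ∈ range k, ((A ^ j) *ᵥ x) 0 * ((A ^ j) *ᵥ y) 0) := by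
  simp only [gatePhase, Matrix.mulVec_add, Pi.add_apply, I_pow_val_add, prod_mul_distrib,
    AddChar.map_sum_eq_prod]

lemma gatePhase_two_mul {m : ℕ} (hA : A ^ m = 1) (y : QIdx n) :
    gatePhase A (2 * m) y = signChar ((∑ j ∈ range m, (A ^ j) 0) ⬝ᵥ y) := by
  have hperiodic (j : ℕ) : A ^ (m + j) = A ^ j := by rw [pow_add, hA, one_mul]
  rw [gatePhase, two_mul, prod_range_add]
  simp only [hperiodic, ← sq, ← prod_pow, I_pow_val_sq, ← AddChar.map_sum_eq_prod, sum_dotProduct]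
  rfl

lemma linearPhaseGate_mem_unitaryGroup (hA : IsUnit A) :
    linearPhaseGate A ∈ Matrix.unitaryGroup (QIdx n) ℂ :=
  monomialMatrix_mem_unitaryGroup (Matrix.mulVec_injective_of_isUnit hA) fun _ =>
    star_I_pow_mul_self _

lemma linearPhaseGate_mul_pauliMonomial {B : Matrix (Fin n) (Fin n) (ZMod 2)} (hBA : B * A = 1)
    (k : ℕ) (v w : QIdx n) :
    linearPhaseGate A * pauliMonomial k v w =
      pauliMonomial (k + (v 0).val) (A *ᵥ v) ((w + Pi.single 0 (v 0)) ᵥ* B) *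
        linearPhaseGate A := by
  have hdot (y : QIdx n) : ((w + Pi.single 0 (v 0)) ᵥ* B) ⬝ᵥ (A *ᵥ y) = w ⬝ᵥ y + v 0 * y 0 := by
    rw [← Matrix.dotProduct_mulVec, Matrix.mulVec_mulVec, hBA, Matrix.one_mulVec, add_dotProduct,
      single_dotProduct]
  simp only [linearPhaseGate, pauliMonomial, monomialMatrix_mul]
  congr 1
  · funext y
    simp [Matrix.mulVec_add, add_comm]
  · funext y
    simp only [Pi.add_apply, I_pow_val_add, hdot, AddChar.map_add_eq_mul, pow_add]
    ring_nf

lemma linearPhaseGate_mem_clifford (hA : IsUnit A) : linearPhaseGate A ∈ CLevel n 2 := by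
  obtain ⟨B, hBA⟩ := hA.exists_left_inv
  have hU := linearPhaseGate_mem_unitaryGroup A hA
  refine ⟨hU, fun P hP => ?_⟩
  obtain ⟨k, v, w, rfl⟩ := mem_pauliGroup_iff.mp hP
  rw [linearPhaseGate_mul_pauliMonomial A hBA, mul_assoc, ← Matrix.star_eq_conjTranspose,
    Matrix.mem_unitaryGroup_iff.mp hU, mul_one]
  exact mem_pauliGroup_iff.mpr ⟨_, _, _, rfl⟩

end LinearPhaseGate

section PauliPowers

variable {n : ℕ} [NeZero n] (A : Matrix (Fin n) (Fin n) (ZMod 2))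

lemma pow_eq_one_and_gatePhase_eq_of_isPauliUpToPhase {k : ℕ}
    (h : IsPauliUpToPhase n (linearPhaseGate A ^ k)) :
    A ^ k = 1 ∧ ∃ w : QIdx n, ∀ y, gatePhase A k y = signChar (w ⬝ᵥ y) := by
  obtain ⟨c, P, -, hP, hUP⟩ := h
  obtain ⟨l, v, w, rfl⟩ := mem_pauliGroup_iff.mp hP
  rw [linearPhaseGate_pow, pauliMonomial, smul_monomialMatrix,
    monomialMatrix_eq_iff (gatePhase_ne_zero A k)] at hUP
  obtain ⟨hmap, hphase⟩ := hUP
  have hv : v = 0 := by simpa using (congrFun hmap 0).symm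
  have hc : c * I ^ l = 1 := by simpa [mul_assoc] using (congrFun hphase 0).symm
  refine ⟨Matrix.ext_iff_mulVec.mpr fun y => by simpa [hv] using congrFun hmap y, w, fun y => ?_⟩
  rw [congrFun hphase y, ← mul_assoc, hc, one_mul]

lemma sum_mulVec_mul_mulVec_eq_zero_of_isPauliUpToPhase {k : ℕ}
    (h : IsPauliUpToPhase n (linearPhaseGate A ^ k)) (x y : QIdx n) :
    ∑ j ∈ range k, ((A ^ j) *ᵥ x) 0 * ((A ^ j) *ᵥ y) 0 = 0 := by
  obtain ⟨-, w, hw⟩ := pow_eq_one_and_gatePhase_eq_of_isPauliUpToPhase A h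
  have hadd := gatePhase_add A k x y
  rw [hw, hw, hw, dotProduct_add, AddChar.map_add_eq_mul] at hadd
  rw [← signChar_eq_one_iff]
  exact (mul_eq_left₀ (mul_ne_zero (signChar_ne_zero _) (signChar_ne_zero _))).mp hadd.symm

lemma isPauliUpToPhase_linearPhaseGate_pow_two_mul {m : ℕ} (hA : A ^ m = 1) :
    IsPauliUpToPhase n (linearPhaseGate A ^ (2 * m)) := by
  refine ⟨1, pauliMonomial 0 0 (∑ j ∈ range m, (A ^ j) 0), by simp,
    mem_pauliGroup_iff.mpr ⟨_, _, _, rfl⟩, ?_⟩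
  rw [one_smul, linearPhaseGate_pow, pow_mul', hA, one_pow, pauliMonomial]
  congr 1
  · funext y; simp
  · funext y; simp [gatePhase_two_mul A hA]

end PauliPowers

section JordanBlock

variable (n : ℕ) (R : Type*)

def shiftMatrix [Zero R] [One R] : Matrix (Fin n) (Fin n) R :=
  Matrix.of fun i j => if (i : ℕ) + 1 = j then 1 else 0

lemma shiftMatrix_pow_apply [Semiring R] (m : ℕ) (i j : Fin n) :
    (shiftMatrix n R ^ m) i j = if (i : ℕ) + m = j then 1 else 0 := by
  induction m generalizing i with
  | zero => simp [Matrix.one_apply, Fin.ext_iff]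
  | succ m ih =>
    rw [pow_succ', Matrix.mul_apply]
    by_cases hi : (i : ℕ) + 1 < n
    · rw [Finset.sum_eq_single ⟨(i : ℕ) + 1, hi⟩]
      · rw [ih, shiftMatrix, Matrix.of_apply, if_pos rfl, one_mul, add_assoc, add_comm 1 m]
      · intro x _ hx
        rw [shiftMatrix, Matrix.of_apply, if_neg fun h => hx (Fin.ext h.symm), zero_mul]
      · simp
    · rw [Finset.sum_eq_zero, if_neg (by omega)]
      intro x _
      rw [shiftMatrix, Matrix.of_apply, if_neg (by omega), zero_mul]

lemma shiftMatrix_pow_eq_zero [Semiring R] {m : ℕ} (hm : n ≤ m) : shiftMatrix n R ^ m = 0 := by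
  ext i j
  rw [shiftMatrix_pow_apply, if_neg (by omega), Matrix.zero_apply]

lemma shiftMatrix_pow_ne_zero [Semiring R] [Nontrivial R] {m : ℕ} (hm : m < n) :
    shiftMatrix n R ^ m ≠ 0 := by
  intro h
  have := congrFun (congrFun h ⟨0, by omega⟩) ⟨m, hm⟩
  simp [shiftMatrix_pow_apply] at this

def jordanBlock [Semiring R] : Matrix (Fin n) (Fin n) R := 1 + shiftMatrix n R

lemma jordanBlock_isUnit [Ring R] : IsUnit (jordanBlock n R) :=
  IsNilpotent.isUnit_one_add ⟨n, shiftMatrix_pow_eq_zero n R le_rfl⟩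

lemma jordanBlock_pow_apply_zero [Semiring R] [NeZero n] (j : ℕ) (l : Fin n) :
    (jordanBlock n R ^ j) 0 l = j.choose l := by
  rw [jordanBlock, add_comm, (Commute.one_right _).add_pow]
  simp only [one_pow, mul_one, ← nsmul_eq_mul', Matrix.sum_apply, Matrix.smul_apply]
  simp only [shiftMatrix_pow_apply, Fin.val_zero, zero_add, smul_ite, smul_zero, sum_ite_eq',
    mem_range, nsmul_eq_mul, mul_one]
  split_ifs with h
  · rfl
  · rw [Nat.choose_eq_zero_of_lt (by omega), Nat.cast_zero]

lemma jordanBlock_pow_two_pow [Semiring R] [CharP R 2] [NeZero n] (t : ℕ) :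
    jordanBlock n R ^ 2 ^ t = 1 + shiftMatrix n R ^ 2 ^ t := by
  rw [jordanBlock, add_pow_char_pow_of_commute 2 t (Commute.one_left _), one_pow]

lemma jordanBlock_pow_two_pow_eq_one_iff [Ring R] [Nontrivial R] [CharP R 2] [NeZero n]
    (t : ℕ) : jordanBlock n R ^ 2 ^ t = 1 ↔ n ≤ 2 ^ t := by
  rw [jordanBlock_pow_two_pow, add_eq_left]
  exact ⟨fun h => not_lt.mp fun hlt => shiftMatrix_pow_ne_zero n R hlt h,
    shiftMatrix_pow_eq_zero n R⟩

end JordanBlock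

section Binomial

open Polynomial in
lemma choose_prime_pow_add_cast (p : ℕ) [Fact p.Prime] (s r m : ℕ) :
    ((p ^ s + r).choose m : ZMod p) =
      r.choose m + if p ^ s ≤ m then (r.choose (m - p ^ s) : ZMod p) else 0 := by
  have h : ((X : (ZMod p)[X]) + 1) ^ (p ^ s + r) = (X + 1) ^ r + X ^ p ^ s * (X + 1) ^ r := by
    rw [pow_add, add_pow_char_pow, one_pow]
    ring
  simpa [coeff_X_add_one_pow, coeff_X_pow_mul', apply_ite] using congrArg (coeff · m) h

lemma sum_choose_two_pow_mul_choose_two_pow_sub_one (s : ℕ) :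
    ∑ j ∈ range (2 ^ (s + 1)), (j.choose (2 ^ s) : ZMod 2) * j.choose (2 ^ s - 1) = 1 := by
  have hpos : 0 < 2 ^ s := Nat.two_pow_pos s
  rw [pow_succ, mul_two, sum_range_add, sum_eq_zero fun j hj => by
    rw [Nat.choose_eq_zero_of_lt (mem_range.mp hj), Nat.cast_zero, zero_mul], zero_add]
  rw [sum_eq_single (2 ^ s - 1)]
  · simp [choose_prime_pow_add_cast, Nat.choose_eq_zero_of_lt (Nat.sub_lt hpos one_pos)]
  · intro r hr hne
    rw [mem_range] at hr
    simp [choose_prime_pow_add_cast, Nat.choose_eq_zero_of_lt (show r < 2 ^ s - 1 by omega)]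
  · simp [hpos]

end Binomial

lemma Nat.clog_base_mul {b n : ℕ} (hb : 1 < b) (hn : 0 < n) :
    Nat.clog b (b * n) = Nat.clog b n + 1 := by
  refine eq_of_forall_ge_iff fun k => ?_
  rw [Nat.clog_le_iff_le_pow hb]
  rcases k with _ | k
  · simp only [pow_zero, nonpos_iff_eq_zero, Nat.add_eq_zero_iff, one_ne_zero, and_false,
      iff_false, not_le]
    nlinarith
  · rw [pow_succ', Nat.mul_le_mul_left_iff (by omega), ← Nat.clog_le_iff_le_pow hb]
    omega

lemma sum_jordanBlock_mulVec_single_mul_eq_one {n s : ℕ} [NeZero n] (hs : 2 ^ s < n) :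
    ∑ j ∈ range (2 ^ (s + 1)), ((jordanBlock n (ZMod 2) ^ j) *ᵥ Pi.single ⟨2 ^ s, hs⟩ 1) 0 *
      ((jordanBlock n (ZMod 2) ^ j) *ᵥ Pi.single ⟨2 ^ s - 1, (Nat.sub_le _ _).trans_lt hs⟩ 1) 0
      = 1 := by
  simp only [Matrix.mulVec_single_one, Matrix.col_apply, jordanBlock_pow_apply_zero]
  exact sum_choose_two_pow_mul_choose_two_pow_sub_one s

/-- Tightness of the Pauli-periodicity bound: for every `n > 1`
there is an `n`-qubit Clifford with Pauli periodicity exactly `⌈log₂(2n)⌉`. -/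
theorem pauli_periodicity_bound_tight (n : ℕ) (hn : 1 < n) :
    ∃ U : QMat n, U ∈ CLevel n 2 ∧ HasPauliPeriodicity n (Nat.clog 2 (2 * n)) U := by
  have : NeZero n := ⟨by omega⟩
  obtain ⟨s, hs⟩ : ∃ s, Nat.clog 2 n = s + 1 :=
    Nat.exists_eq_add_one.mpr (Nat.clog_pos one_lt_two hn)
  have hlow : 2 ^ s < n := Nat.lt_clog_iff_pow_lt one_lt_two |>.mp (by omega)
  have hJ : jordanBlock n (ZMod 2) ^ 2 ^ (s + 1) = 1 :=
    (jordanBlock_pow_two_pow_eq_one_iff n _ _).mpr (hs ▸ Nat.le_pow_clog one_lt_two n)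
  rw [Nat.clog_base_mul one_lt_two (by omega), hs]
  refine ⟨linearPhaseGate (jordanBlock n (ZMod 2)),
    linearPhaseGate_mem_clifford _ (jordanBlock_isUnit n _), ?_, fun t ht hP => ?_⟩
  · rw [pow_succ']
    exact isPauliUpToPhase_linearPhaseGate_pow_two_mul _ hJ
  · rcases Nat.lt_succ_iff_lt_or_eq.mp ht with ht | rfl
    · have hJt := (pow_eq_one_and_gatePhase_eq_of_isPauliUpToPhase _ hP).1
      rw [jordanBlock_pow_two_pow_eq_one_iff] at hJt
      exact absurd (hJt.trans (Nat.pow_le_pow_right two_pos (Nat.le_of_lt_succ ht)))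
        (not_le.mpr hlow)
    · exact one_ne_zero <| (sum_jordanBlock_mulVec_single_mul_eq_one hlow).symm.trans
        (sum_mulVec_mul_mulVec_eq_zero_of_isPauliUpToPhase _ hP _ _)
end

section
/- Controlled-block-diagonal unitaries: Let n ≥ 1, let A, B ∈ U(2^n) be unitaries, and let r ≥ 1. If the block-diagonal unitary D = |0⟩⟨0|⊗A + |1⟩⟨1|⊗B (the 2×2 block matrix with diagonal blocks A and B) lies in 𝒞_r^{(n+1)}, then both A and B lie in 𝒞_r^{(n)}. -/
open Matrix

/-- The block-diagonal gate `|0⟩⟨0|⊗A + |1⟩⟨1|⊗B` on `n+1` qubits. -/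
def blockDiagGate {n : ℕ} (A B : QMat n) : QMat (n + 1) :=
  Matrix.of fun a b =>
    if a 0 = b 0 then
      (if a 0 = 0 then A (Fin.tail a) (Fin.tail b) else B (Fin.tail a) (Fin.tail b))
    else 0

/-!
Conjugating `D = blockDiagGate A B` by the Pauli `I ⊗ P` gives
`blockDiagGate (A P A†) (B P B†)`, so induction on the level reduces everything to the Pauli
level. There, a block-diagonal Pauli string must carry `I` or `Z` on the control qubit, so each
block is, up to sign, the same `n`-qubit Pauli string. Unitarity of the blocks, needed to stay in
the hierarchy, comes from that of `D`, which every level contains.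
-/

theorem Matrix.of_prod_mem_unitaryGroup {ι α R : Type*} [Fintype ι] [DecidableEq ι]
    [Fintype α] [DecidableEq α] [CommRing R] [StarRing R] {P : ι → Matrix α α R}
    (hP : ∀ j, P j ∈ unitaryGroup α R) :
    Matrix.of (fun a b : ι → α => ∏ j, P j (a j) (b j)) ∈ unitaryGroup (ι → α) R := by
  rw [mem_unitaryGroup_iff]
  ext a b
  have hPj : ∀ j, ∑ x, P j (a j) x * star (P j (b j) x) = (1 : Matrix α α R) (a j) (b j) := by
    intro j
    rw [← (mem_unitaryGroup_iff.mp (hP j)), mul_apply]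
    simp [star_apply]
  simp only [mul_apply, star_apply, of_apply, star_prod, ← Finset.prod_mul_distrib]
  rw [← Fintype.prod_sum fun j x => P j (a j) x * star (P j (b j) x)]
  simp only [hPj, one_apply, Fintype.prod_boole, funext_iff]

lemma ZMod.two_eq_zero_or_one (x : ZMod 2) : x = 0 ∨ x = 1 := by
  revert x; decide

lemma ZMod.sum_two {M : Type*} [AddCommMonoid M] (f : ZMod 2 → M) :
    ∑ x : ZMod 2, f x = f 0 + f 1 := by
  rw [show (Finset.univ : Finset (ZMod 2)) = {0, 1} by decide, Finset.sum_pair (by decide)]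

lemma ne_zero_of_mem_unitary {M : Type*} [MonoidWithZero M] [StarMul M] [Nontrivial M] {U : M}
    (hU : U ∈ unitary M) : U ≠ 0 := by
  rintro rfl
  simpa using hU.2

def IsPauliPhase (ω : ℂ) : Prop := ω = 1 ∨ ω = -1 ∨ ω = Complex.I ∨ ω = -Complex.I

lemma IsPauliPhase.mul_sign {ω s : ℂ} (hω : IsPauliPhase ω) (hs : s = 1 ∨ s = -1) :
    IsPauliPhase (ω * s) := by
  rcases hs with rfl | rfl <;> rcases hω with rfl | rfl | rfl | rfl <;> simp [IsPauliPhase]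

lemma IsPauliPhase.mem_unitary {ω : ℂ} (hω : IsPauliPhase ω) : ω ∈ unitary ℂ := by
  rcases hω with rfl | rfl | rfl | rfl <;> simp [Unitary.mem_iff]

def IsSingleQubitPauli (P : Matrix (ZMod 2) (ZMod 2) ℂ) : Prop :=
  P = 1 ∨ P = pauliX ∨ P = pauliY ∨ P = pauliZ

namespace IsSingleQubitPauli

variable {P : Matrix (ZMod 2) (ZMod 2) ℂ}

lemma mem_unitaryGroup (hP : IsSingleQubitPauli P) : P ∈ unitaryGroup (ZMod 2) ℂ := by
  rw [mem_unitaryGroup_iff]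
  ext a b
  rcases hP with rfl | rfl | rfl | rfl <;>
    rcases ZMod.two_eq_zero_or_one a with rfl | rfl <;>
    rcases ZMod.two_eq_zero_or_one b with rfl | rfl <;>
    simp [mul_apply, ZMod.sum_two, pauliX, pauliY, pauliZ, one_apply]

lemma diag_eq_zero_or_sign (hP : IsSingleQubitPauli P) (x : ZMod 2) :
    P x x = 0 ∨ P x x = 1 ∨ P x x = -1 := by
  rcases hP with rfl | rfl | rfl | rfl <;>
    rcases ZMod.two_eq_zero_or_one x with rfl | rfl <;> simp [pauliX, pauliY, pauliZ]

end IsSingleQubitPauli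

lemma pauliGroup_subset_unitaryGroup (n : ℕ) : PauliGroup n ⊆ unitaryGroup (QIdx n) ℂ := by
  rintro _ ⟨ω, P, hω, hP, rfl⟩
  exact Unitary.smul_mem_of_mem (IsPauliPhase.mem_unitary hω)
    (Matrix.of_prod_mem_unitaryGroup fun j => IsSingleQubitPauli.mem_unitaryGroup (hP j))

section BlockDiagGate

variable {n : ℕ}

lemma QIdx.ext_cons {M N : QMat (n + 1)}
    (h : ∀ x y a b, M (Fin.cons x a) (Fin.cons y b) = N (Fin.cons x a) (Fin.cons y b)) :
    M = N := by
  ext a b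
  rw [← Fin.cons_self_tail a, ← Fin.cons_self_tail b]
  exact h _ _ _ _

lemma QIdx.sum_succ {M : Type*} [AddCommMonoid M] (f : QIdx (n + 1) → M) :
    ∑ c, f c = ∑ t : QIdx n, f (Fin.cons 0 t) + ∑ t : QIdx n, f (Fin.cons 1 t) := by
  rw [← (Fin.consEquiv fun _ => ZMod 2).sum_comp, Fintype.sum_prod_type, ZMod.sum_two]
  rfl

@[simp] lemma blockDiagGate_cons_cons (A B : QMat n) (x y : ZMod 2) (a b : QIdx n) :
    blockDiagGate A B (Fin.cons x a) (Fin.cons y b) =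
      if x = y then (if x = 0 then A a b else B a b) else 0 := by
  simp [blockDiagGate]

lemma blockDiagGate_inj {A B C E : QMat n} :
    blockDiagGate A B = blockDiagGate C E ↔ A = C ∧ B = E := by
  refine ⟨fun h => ⟨?_, ?_⟩, by rintro ⟨rfl, rfl⟩; rfl⟩ <;> ext a b
  · simpa using congr_fun₂ h (Fin.cons 0 a) (Fin.cons 0 b)
  · simpa using congr_fun₂ h (Fin.cons 1 a) (Fin.cons 1 b)

lemma blockDiagGate_one : blockDiagGate (1 : QMat n) 1 = 1 := by
  refine QIdx.ext_cons fun x y a b => ?_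
  rcases ZMod.two_eq_zero_or_one x with rfl | rfl <;>
    rcases ZMod.two_eq_zero_or_one y with rfl | rfl <;> simp [one_apply, Fin.cons_inj]

lemma blockDiagGate_mul (A B C E : QMat n) :
    blockDiagGate A B * blockDiagGate C E = blockDiagGate (A * C) (B * E) := by
  refine QIdx.ext_cons fun x y a b => ?_
  rw [mul_apply, QIdx.sum_succ]
  rcases ZMod.two_eq_zero_or_one x with rfl | rfl <;>
    rcases ZMod.two_eq_zero_or_one y with rfl | rfl <;> simp [mul_apply]

lemma blockDiagGate_conjTranspose (A B : QMat n) :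
    (blockDiagGate A B)ᴴ = blockDiagGate Aᴴ Bᴴ := by
  refine QIdx.ext_cons fun x y a b => ?_
  rcases ZMod.two_eq_zero_or_one x with rfl | rfl <;>
    rcases ZMod.two_eq_zero_or_one y with rfl | rfl <;> simp

lemma mem_unitaryGroup_of_blockDiagGate_mem {A B : QMat n}
    (h : blockDiagGate A B ∈ unitaryGroup (QIdx (n + 1)) ℂ) :
    A ∈ unitaryGroup (QIdx n) ℂ ∧ B ∈ unitaryGroup (QIdx n) ℂ := by
  rw [mem_unitaryGroup_iff, star_eq_conjTranspose, blockDiagGate_conjTranspose,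
    blockDiagGate_mul, ← blockDiagGate_one, blockDiagGate_inj] at h
  exact ⟨mem_unitaryGroup_iff.mpr h.1, mem_unitaryGroup_iff.mpr h.2⟩

end BlockDiagGate

section PauliLevel

variable {n : ℕ}

lemma blockDiagGate_self_mem_pauliGroup {P : QMat n} (h : P ∈ PauliGroup n) :
    blockDiagGate P P ∈ PauliGroup (n + 1) := by
  obtain ⟨ω, Q, hω, hQ, rfl⟩ := h
  refine ⟨ω, Fin.cons 1 Q, hω, fun j => Fin.cases (Or.inl rfl) hQ j,
    QIdx.ext_cons fun x y a b => ?_⟩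
  rcases ZMod.two_eq_zero_or_one x with rfl | rfl <;>
    rcases ZMod.two_eq_zero_or_one y with rfl | rfl <;> simp [Fin.prod_univ_succ, one_apply]

lemma mem_pauliGroup_of_diag_block {M : QMat (n + 1)} (hM : M ∈ PauliGroup (n + 1))
    {N : QMat n} (hN : N ≠ 0) (x : ZMod 2)
    (hNM : ∀ a b, N a b = M (Fin.cons x a) (Fin.cons x b)) : N ∈ PauliGroup n := by
  obtain ⟨ω, Q, hω, hQ, rfl⟩ := hM
  have hN_eq : N = (ω * Q 0 x x) • Matrix.of fun a b : QIdx n => ∏ j, Q j.succ (a j) (b j) := by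
    ext a b
    simp [hNM, Fin.prod_univ_succ, mul_assoc]
  rcases IsSingleQubitPauli.diag_eq_zero_or_sign (hQ 0) x with h0 | hs
  · exact absurd (by simpa [h0] using hN_eq) hN
  · exact ⟨_, _, IsPauliPhase.mul_sign hω hs, fun j => hQ j.succ, hN_eq⟩

lemma mem_pauliGroup_of_blockDiagGate_mem {A B : QMat n}
    (h : blockDiagGate A B ∈ PauliGroup (n + 1)) : A ∈ PauliGroup n ∧ B ∈ PauliGroup n := by
  obtain ⟨hA, hB⟩ := mem_unitaryGroup_of_blockDiagGate_mem (pauliGroup_subset_unitaryGroup _ h)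
  exact ⟨mem_pauliGroup_of_diag_block h (ne_zero_of_mem_unitary hA) 0 (by simp),
    mem_pauliGroup_of_diag_block h (ne_zero_of_mem_unitary hB) 1 (by simp)⟩

end PauliLevel

lemma mem_CHaux_of_blockDiagGate_mem {n : ℕ} :
    ∀ {k} {A B : QMat n}, blockDiagGate A B ∈ CHaux (n + 1) k → A ∈ CHaux n k ∧ B ∈ CHaux n k
  | 0, _, _, h => mem_pauliGroup_of_blockDiagGate_mem h
  | k + 1, A, B, ⟨hD, hconj⟩ => by
    obtain ⟨hA, hB⟩ := mem_unitaryGroup_of_blockDiagGate_mem hD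
    have hconj_blocks : ∀ P ∈ PauliGroup n, A * P * Aᴴ ∈ CHaux n k ∧ B * P * Bᴴ ∈ CHaux n k := by
      intro P hP
      have h := hconj _ (blockDiagGate_self_mem_pauliGroup hP)
      rw [blockDiagGate_conjTranspose, blockDiagGate_mul, blockDiagGate_mul] at h
      exact mem_CHaux_of_blockDiagGate_mem h
    exact ⟨⟨hA, fun P hP => (hconj_blocks P hP).1⟩, ⟨hB, fun P hP => (hconj_blocks P hP).2⟩⟩

theorem blockDiag_level_general (n r : ℕ)
    (A B : QMat n)
    (hD : blockDiagGate A B ∈ CLevel (n + 1) r) :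
    A ∈ CLevel n r ∧ B ∈ CLevel n r :=
  mem_CHaux_of_blockDiagGate_mem hD

/-- Controlled-block-diagonal unitaries: if
`D = |0⟩⟨0|⊗A + |1⟩⟨1|⊗B ∈ 𝒞_r^{(n+1)}` (r ≥ 1), then `A, B ∈ 𝒞_r^{(n)}`. -/
theorem blockDiag_level (n r : ℕ) (hn : 1 ≤ n) (hr : 1 ≤ r)
    (A B : QMat n)
    (hA : A ∈ Matrix.unitaryGroup (QIdx n) ℂ)
    (hB : B ∈ Matrix.unitaryGroup (QIdx n) ℂ)
    (hD : blockDiagGate A B ∈ CLevel (n + 1) r) :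
    A ∈ CLevel n r ∧ B ∈ CLevel n r :=
  blockDiag_level_general n r A B hD
end

section
/- Pauli periodicity of affine Clifford permutations: Let n ≥ 1, let M be an invertible n×n matrix over 𝔽₂ and φ ∈ 𝔽₂^n, and let U be the permutation unitary on C^{2^n} (with computational basis indexed by 𝔽₂^n) defined by U|a⟩ = |Ma + φ⟩ for all a ∈ 𝔽₂^n. If U^{2^m} lies in the n-qubit Pauli group 𝒫_n up to a global phase for some m ≥ 0, then M^{2^m} = I. Consequently, U^{2^{⌈log₂ n⌉}} lies in 𝒫_n up to a global phase whenever some 2-power of U does; in particular, the Pauli periodicity of any Pauli-periodic such U is at most ⌈log₂ n⌉. -/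
open Matrix

/-- The affine permutation unitary `U|a⟩ = |Ma + φ⟩` on `n` qubits. -/
def affinePermGate {n : ℕ} (M : Matrix (Fin n) (Fin n) (ZMod 2)) (φ : QIdx n) :
    QMat n :=
  Matrix.of fun a b => if a = M.mulVec b + φ then 1 else 0

/-!
Powers of an affine permutation `a ↦ Ma + φ` are again affine, with linear part `M^k`. A Pauli
string (up to phase) is a monomial matrix whose support is a translation `a = b + s`; an affine
permutation with that support must have linear part `1`, while every translation is a Pauli
`X`-string. So `U^(2^m)` is Pauli up to phase iff `M^(2^m) = 1`. In characteristic `2` this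
makes `M - 1` nilpotent, hence `(M - 1)^n = 0`, and then `(M - 1)^(2^⌈log₂ n⌉) = 0`, which by
Frobenius is `M^(2^⌈log₂ n⌉) = 1`.
-/

namespace Matrix

variable {n R : Type*} [Fintype n] [DecidableEq n] [CommRing R] [IsDomain R]

theorem pow_card_eq_zero_of_isNilpotent {N : Matrix n n R} (hN : IsNilpotent N) :
    N ^ Fintype.card n = 0 := by
  have hchar : N.charpoly = Polynomial.X ^ Fintype.card n :=
    sub_eq_zero.mp (isNilpotent_charpoly_sub_pow_of_isNilpotent hN).eq_zero
  simpa [hchar] using N.aeval_self_charpoly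

theorem pow_char_pow_clog_card_eq_one (p : ℕ) [Fact p.Prime] [CharP R p] {A : Matrix n n R}
    {m : ℕ} (hA : A ^ p ^ m = 1) : A ^ p ^ Nat.clog p (Fintype.card n) = 1 := by
  cases isEmpty_or_nonempty n
  · exact Subsingleton.elim _ _
  have hfrob (k : ℕ) : (A - 1) ^ p ^ k = A ^ p ^ k - 1 := by
    rw [sub_pow_char_pow_of_commute p k (Commute.one_right A), one_pow]
  have hnil : IsNilpotent (A - 1) := ⟨p ^ m, by rw [hfrob, hA, sub_self]⟩
  have hle : Fintype.card n ≤ p ^ Nat.clog p (Fintype.card n) :=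
    Nat.le_pow_clog (Fact.out : p.Prime).one_lt _
  rw [← sub_eq_zero, ← hfrob]
  exact pow_eq_zero_of_le hle (pow_card_eq_zero_of_isNilpotent hnil)

end Matrix

section AffinePermGate

variable {n : ℕ}

theorem affinePermGate_mul (A B : Matrix (Fin n) (Fin n) (ZMod 2)) (ψ χ : QIdx n) :
    affinePermGate A ψ * affinePermGate B χ = affinePermGate (A * B) (A *ᵥ χ + ψ) := by
  ext a b
  simp only [affinePermGate, mul_apply, of_apply, mul_ite, mul_one, mul_zero,
    Finset.sum_ite_eq', Finset.mem_univ, if_true, mulVec_add, mulVec_mulVec, add_assoc]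

theorem affinePermGate_one_zero : affinePermGate (1 : Matrix (Fin n) (Fin n) (ZMod 2)) 0 = 1 := by
  ext a b
  simp [affinePermGate, one_apply]

theorem exists_affinePermGate_pow_eq (A : Matrix (Fin n) (Fin n) (ZMod 2)) (ψ : QIdx n) (k : ℕ) :
    ∃ χ : QIdx n, affinePermGate A ψ ^ k = affinePermGate (A ^ k) χ := by
  induction k with
  | zero => exact ⟨0, by rw [pow_zero, pow_zero, affinePermGate_one_zero]⟩
  | succ k ih =>
    obtain ⟨χ, hχ⟩ := ih
    exact ⟨_, by rw [pow_succ, hχ, affinePermGate_mul, ← pow_succ]⟩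

theorem ZMod.eq_add_one_iff_ne_of_two : ∀ x y : ZMod 2, x = y + 1 ↔ x ≠ y := by decide

theorem exists_shift_of_apply_ne_zero_of_pauli {Q : Matrix (ZMod 2) (ZMod 2) ℂ}
    (hQ : Q = 1 ∨ Q = pauliX ∨ Q = pauliY ∨ Q = pauliZ) :
    ∃ s : ZMod 2, ∀ a b, Q a b ≠ 0 → a = b + s := by
  rcases hQ with rfl | rfl | rfl | rfl
  · exact ⟨0, fun a b h => by rw [add_zero]; by_contra hab; simp [one_apply, hab] at h⟩
  · exact ⟨1, fun a b h =>
      (ZMod.eq_add_one_iff_ne_of_two a b).2 fun hab => h (by simp [pauliX, hab])⟩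
  · exact ⟨1, fun a b h =>
      (ZMod.eq_add_one_iff_ne_of_two a b).2 fun hab => h (by simp [pauliY, hab])⟩
  · exact ⟨0, fun a b h => by rw [add_zero]; by_contra hab; simp [pauliZ, hab] at h⟩

theorem IsPauliUpToPhase.exists_shift_of_apply_ne_zero {P : QMat n}
    (hP : IsPauliUpToPhase n P) : ∃ s : QIdx n, ∀ a b, P a b ≠ 0 → a = b + s := by
  obtain ⟨c, _, -, ⟨ω, Q, -, hQ, rfl⟩, rfl⟩ := hP
  choose s hs using fun j => exists_shift_of_apply_ne_zero_of_pauli (hQ j)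
  refine ⟨s, fun a b hab => funext fun j => hs j _ _ fun hj => hab ?_⟩
  simp [Finset.prod_eq_zero (Finset.mem_univ j) (f := fun j => Q j (a j) (b j)) hj]

theorem eq_one_of_isPauliUpToPhase_affinePermGate {A : Matrix (Fin n) (Fin n) (ZMod 2)}
    {ψ : QIdx n} (h : IsPauliUpToPhase n (affinePermGate A ψ)) : A = 1 := by
  obtain ⟨s, hs⟩ := h.exists_shift_of_apply_ne_zero
  have hsupp (b : QIdx n) : A *ᵥ b + ψ = b + s := hs _ _ (by simp [affinePermGate])
  have hψ : ψ = s := by simpa using hsupp 0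
  refine ext_iff_mulVec.mpr fun b => ?_
  rw [one_mulVec]
  exact add_right_cancel (hψ ▸ hsupp b)

theorem isPauliUpToPhase_affinePermGate_one (ψ : QIdx n) :
    IsPauliUpToPhase n (affinePermGate (1 : Matrix (Fin n) (Fin n) (ZMod 2)) ψ) := by
  have hX (e x y : ZMod 2) :
      (if e = 0 then (1 : Matrix (ZMod 2) (ZMod 2) ℂ) else pauliX) x y =
        if x = y + e then 1 else 0 := by
    by_cases he : e = 0
    · simp [he, one_apply]
    · obtain rfl : e = 1 := by simpa using (ZMod.eq_add_one_iff_ne_of_two e 0).2 he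
      simp [pauliX, ZMod.eq_add_one_iff_ne_of_two, ite_not]
  refine ⟨1, _, by simp, ⟨1, fun j => if ψ j = 0 then 1 else pauliX, Or.inl rfl,
    fun j => by dsimp only; split_ifs <;> simp, rfl⟩, ?_⟩
  ext a b
  simp only [one_smul, of_apply, affinePermGate, one_mulVec, hX, Finset.prod_ite_zero,
    Finset.prod_const_one, funext_iff, Pi.add_apply, Finset.mem_univ, forall_const]

theorem isPauliUpToPhase_affinePermGate_iff {A : Matrix (Fin n) (Fin n) (ZMod 2)}
    {ψ : QIdx n} : IsPauliUpToPhase n (affinePermGate A ψ) ↔ A = 1 :=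
  ⟨eq_one_of_isPauliUpToPhase_affinePermGate,
    fun h => h ▸ isPauliUpToPhase_affinePermGate_one ψ⟩

theorem isPauliUpToPhase_affinePermGate_pow_iff (A : Matrix (Fin n) (Fin n) (ZMod 2))
    (ψ : QIdx n) (k : ℕ) : IsPauliUpToPhase n (affinePermGate A ψ ^ k) ↔ A ^ k = 1 := by
  obtain ⟨χ, hχ⟩ := exists_affinePermGate_pow_eq A ψ k
  rw [hχ, isPauliUpToPhase_affinePermGate_iff]

end AffinePermGate

theorem affine_perm_pauli_periodicity_general (n : ℕ)
    (M : Matrix (Fin n) (Fin n) (ZMod 2)) (φ : QIdx n) :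
    (∀ m : ℕ, IsPauliUpToPhase n (affinePermGate M φ ^ 2 ^ m) → M ^ 2 ^ m = 1) ∧
    ((∃ m : ℕ, IsPauliUpToPhase n (affinePermGate M φ ^ 2 ^ m)) →
      IsPauliUpToPhase n (affinePermGate M φ ^ 2 ^ Nat.clog 2 n)) ∧
    (∀ m : ℕ, HasPauliPeriodicity n m (affinePermGate M φ) → m ≤ Nat.clog 2 n) := by
  simp only [HasPauliPeriodicity, isPauliUpToPhase_affinePermGate_pow_iff]
  have hclog : (∃ m : ℕ, M ^ 2 ^ m = 1) → M ^ 2 ^ Nat.clog 2 n = 1 := fun ⟨_, hm⟩ => by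
    simpa using Matrix.pow_char_pow_clog_card_eq_one 2 hm
  refine ⟨fun _ => id, hclog, fun m ⟨hm, hmin⟩ => ?_⟩
  by_contra! hlt
  exact hmin _ hlt (hclog ⟨m, hm⟩)

/-- Pauli periodicity of affine Clifford permutations: for the
permutation unitary `U|a⟩ = |Ma + φ⟩` with `M` invertible over `𝔽₂`:
(1) if `U^(2^m)` is Pauli up to phase then `M^(2^m) = 1`;
(2) if some 2-power of `U` is Pauli up to phase then `U^(2^⌈log₂ n⌉)` is;
(3) any Pauli periodicity of `U` is at most `⌈log₂ n⌉`. -/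
theorem affine_perm_pauli_periodicity (n : ℕ) (hn : 1 ≤ n)
    (M : Matrix (Fin n) (Fin n) (ZMod 2)) (hM : IsUnit M) (φ : QIdx n) :
    (∀ m : ℕ, IsPauliUpToPhase n (affinePermGate M φ ^ 2 ^ m) → M ^ 2 ^ m = 1) ∧
    ((∃ m : ℕ, IsPauliUpToPhase n (affinePermGate M φ ^ 2 ^ m)) →
      IsPauliUpToPhase n (affinePermGate M φ ^ 2 ^ Nat.clog 2 n)) ∧
    (∀ m : ℕ, HasPauliPeriodicity n m (affinePermGate M φ) → m ≤ Nat.clog 2 n) :=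
  affine_perm_pauli_periodicity_general n M φ
end

section
/- Nilpotency index of the symplectic matrix of the S_X-CNOT-H string: Let n ≥ 3 and define the 2n×2n matrix M_n over 𝔽₂ in block form M_n = [[A, B],[C, D]] with n×n blocks given entrywise (for 1 ≤ i, j ≤ n) by: A_{ij} = 1 iff (i ≥ j and j > 1); B_{ij} = 1 iff (j = 1 or (i = j = n)); C_{ij} = 1 iff (i = j = 1); D_{ij} = 1 iff ((i = j and i > 1) or j = i + 1). Then N := M_n − I_{2n} is nilpotent of index exactly 2n: N^{2n} = 0 and N^{2n−1} ≠ 0. -/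
open Matrix Finset

def Nmat (n : ℕ) : Matrix (Fin n ⊕ Fin n) (Fin n ⊕ Fin n) (ZMod 2) :=
  Matrix.fromBlocks
    (Matrix.of fun i j : Fin n => if (j : ℕ) ≥ 1 ∧ (i : ℕ) ≥ (j : ℕ) then 1 else 0)
    (Matrix.of fun i j : Fin n => if (j : ℕ) = 0 ∨ ((i : ℕ) = n - 1 ∧ (j : ℕ) = n - 1) then 1 else 0)
    (Matrix.of fun i j : Fin n => if (i : ℕ) = 0 ∧ (j : ℕ) = 0 then 1 else 0)
    (Matrix.of fun i j : Fin n => if ((i : ℕ) = (j : ℕ) ∧ (i : ℕ) ≥ 1) ∨ (j : ℕ) = (i : ℕ) + 1 then 1 else 0)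
  - 1

def wvec (n k : ℕ) : (Fin n ⊕ Fin n) → ZMod 2
  | Sum.inl i => if k = 1 ∧ (i : ℕ) = n - 1 then 1
      else if n ≤ k then ((i : ℕ).choose (k - n) : ZMod 2) else 0
  | Sum.inr i => if k < n ∧ (i : ℕ) = n - 1 - k then 1
      else if k = n ∧ (i : ℕ) = 0 then 1 else 0

lemma sum_range_choose' (r m : ℕ) : ∑ j ∈ range m, Nat.choose j r = m.choose (r + 1) := by
  induction m with
  | zero => simp
  | succ m ih => rw [Finset.sum_range_succ, ih, Nat.choose_succ_succ' m r]; ring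

lemma sum_ind {n : ℕ} (t : ℕ) (ht : t < n) (c : ZMod 2) :
    (∑ j : Fin n, if (j : ℕ) = t then c else 0) = c := by
  rw [Fin.sum_univ_eq_sum_range (fun j => if j = t then c else 0) n,
    Finset.sum_ite_eq' (range n) t (fun _ => c)]
  simp [ht]

lemma natSA (n ii r : ℕ) (h : ii < n) :
    (∑ j ∈ range n, if 1 ≤ j ∧ j ≤ ii then Nat.choose j r else 0) + Nat.choose 0 r
      = (ii + 1).choose (r + 1) := by
  have h1 : (∑ j ∈ range n, if 1 ≤ j ∧ j ≤ ii then Nat.choose j r else 0)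
      = ∑ j ∈ range (ii + 1), if 1 ≤ j ∧ j ≤ ii then Nat.choose j r else 0 := by
    refine (Finset.sum_subset (Finset.range_subset_range.2 (by omega)) ?_).symm
    intro x hx hx'
    simp only [Finset.mem_range] at hx hx'
    rw [if_neg (by omega)]
  rw [h1]
  have h2 : (∑ j ∈ range (ii + 1), if 1 ≤ j ∧ j ≤ ii then Nat.choose j r else 0)
      = ∑ j ∈ range (ii + 1), if 1 ≤ j then Nat.choose j r else 0 := by
    refine Finset.sum_congr rfl fun x hx => ?_
    simp only [Finset.mem_range] at hx
    by_cases h1x : 1 ≤ x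
    · rw [if_pos ⟨h1x, by omega⟩, if_pos h1x]
    · rw [if_neg (by omega), if_neg h1x]
  rw [h2, Finset.sum_range_succ' _ ii, ← sum_range_choose' r (ii + 1),
    Finset.sum_range_succ' _ ii]
  simp only [if_neg (by omega : ¬ (1:ℕ) ≤ 0), add_zero]
  refine congrArg₂ _ (Finset.sum_congr rfl fun x _ => ?_) rfl
  rw [if_pos (by omega)]

lemma chain (n : ℕ) (hn : 3 ≤ n) (k : ℕ) :
    (Nmat n).mulVec (wvec n k) = wvec n (k + 1) := by
  funext p
  rw [Nmat, Matrix.sub_mulVec, Matrix.one_mulVec, Matrix.fromBlocks_mulVec]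
  rcases Nat.lt_or_ge k n with hk | hk
  · -- case k < n
    have e1 : k - n = 0 := by omega
    have e2 : k + 1 - n = 0 := by omega
    cases p with
    | inl i =>
      simp only [Pi.sub_apply, Sum.elim_inl, Pi.add_apply, Matrix.mulVec, dotProduct,
        Matrix.of_apply, Function.comp]
      have hSA : (∑ j : Fin n, (if (j:ℕ) ≥ 1 ∧ (i:ℕ) ≥ (j:ℕ) then (1:ZMod 2) else 0) * wvec n k (Sum.inl j))
          = (if k = 1 ∧ (i:ℕ) = n - 1 then 1 else 0) := by
        have hpt : ∀ j : Fin n, (if (j:ℕ) ≥ 1 ∧ (i:ℕ) ≥ (j:ℕ) then (1:ZMod 2) else 0) * wvec n k (Sum.inl j)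
            = if (j:ℕ) = n - 1 then (if k = 1 ∧ (i:ℕ) = n - 1 then 1 else 0) else 0 := by
          intro j
          have hi := i.isLt; have hj := j.isLt
          simp only [wvec, e1, Nat.choose_zero_right, Nat.cast_one]
          split_ifs <;> first | decide | omega
        rw [Finset.sum_congr rfl fun j _ => hpt j, sum_ind (n-1) (by omega) _]
      have hSB : (∑ j : Fin n, (if (j:ℕ) = 0 ∨ ((i:ℕ) = n - 1 ∧ (j:ℕ) = n - 1) then (1:ZMod 2) else 0) * wvec n k (Sum.inr j))
          = (if k = n - 1 ∨ ((i:ℕ) = n - 1 ∧ k = 0) then 1 else 0) := by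
        have hpt : ∀ j : Fin n, (if (j:ℕ) = 0 ∨ ((i:ℕ) = n - 1 ∧ (j:ℕ) = n - 1) then (1:ZMod 2) else 0) * wvec n k (Sum.inr j)
            = if (j:ℕ) = n - 1 - k then (if k = n - 1 ∨ ((i:ℕ) = n - 1 ∧ k = 0) then 1 else 0) else 0 := by
          intro j
          have hi := i.isLt; have hj := j.isLt
          simp only [wvec]
          split_ifs <;> first | decide | omega
        rw [Finset.sum_congr rfl fun j _ => hpt j, sum_ind (n-1-k) (by omega) _]
      rw [hSA, hSB]
      have hi := i.isLt
      simp only [wvec, e1, e2, Nat.choose_zero_right, Nat.cast_one]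
      split_ifs <;> first | decide | omega
    | inr i =>
      simp only [Pi.sub_apply, Sum.elim_inr, Pi.add_apply, Matrix.mulVec, dotProduct,
        Matrix.of_apply, Function.comp]
      have hSC : (∑ j : Fin n, (if (i:ℕ) = 0 ∧ (j:ℕ) = 0 then (1:ZMod 2) else 0) * wvec n k (Sum.inl j)) = 0 := by
        refine Finset.sum_eq_zero fun j _ => ?_
        have hj := j.isLt
        simp only [wvec, e1, Nat.choose_zero_right, Nat.cast_one]
        split_ifs <;> first | decide | omega
      have hSD : (∑ j : Fin n, (if ((i:ℕ) = (j:ℕ) ∧ (i:ℕ) ≥ 1) ∨ (j:ℕ) = (i:ℕ) + 1 then (1:ZMod 2) else 0) * wvec n k (Sum.inr j))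
          = (if ((i:ℕ) = n - 1 - k ∧ (i:ℕ) ≥ 1) ∨ (n - 1 - k = (i:ℕ) + 1) then 1 else 0) := by
        have hpt : ∀ j : Fin n, (if ((i:ℕ) = (j:ℕ) ∧ (i:ℕ) ≥ 1) ∨ (j:ℕ) = (i:ℕ) + 1 then (1:ZMod 2) else 0) * wvec n k (Sum.inr j)
            = if (j:ℕ) = n - 1 - k then (if ((i:ℕ) = n - 1 - k ∧ (i:ℕ) ≥ 1) ∨ (n - 1 - k = (i:ℕ) + 1) then 1 else 0) else 0 := by
          intro j
          have hi := i.isLt; have hj := j.isLt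
          simp only [wvec]
          split_ifs <;> first | decide | omega
        rw [Finset.sum_congr rfl fun j _ => hpt j, sum_ind (n-1-k) (by omega) _]
      rw [hSC, hSD]
      have hi := i.isLt
      simp only [wvec]
      split_ifs <;> first | decide | omega
  · -- case n ≤ k
    set r := k - n with hr
    have hvl : ∀ j : Fin n, wvec n k (Sum.inl j) = ((Nat.choose (j:ℕ) r : ℕ) : ZMod 2) := by
      intro j; simp only [wvec]; rw [if_neg (by omega), if_pos hk]
    have hvr : ∀ j : Fin n, wvec n k (Sum.inr j) = (if k = n ∧ (j:ℕ) = 0 then 1 else 0) := by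
      intro j; simp only [wvec]; rw [if_neg (by omega)]
    have h0r : ((Nat.choose 0 r : ℕ) : ZMod 2) = (if k = n then 1 else 0) := by
      rcases eq_or_ne k n with h | h
      · rw [if_pos h, show r = 0 by omega]; norm_num
      · rw [if_neg h, Nat.choose_eq_zero_of_lt (by omega : 0 < r)]; norm_num
    cases p with
    | inl i =>
      simp only [Pi.sub_apply, Sum.elim_inl, Pi.add_apply, Matrix.mulVec, dotProduct,
        Matrix.of_apply, Function.comp]
      have hv : wvec n k (Sum.inl i) = (((i:ℕ).choose r : ℕ) : ZMod 2) := hvl i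
      have hR : wvec n (k+1) (Sum.inl i) = (((i:ℕ).choose (r+1) : ℕ) : ZMod 2) := by
        simp only [wvec]
        rw [if_neg (by omega), if_pos (by omega), show k + 1 - n = r + 1 by omega]
      have hSA : (∑ j : Fin n, (if (j:ℕ) ≥ 1 ∧ (i:ℕ) ≥ (j:ℕ) then (1:ZMod 2) else 0) * wvec n k (Sum.inl j))
          = (((∑ j ∈ range n, if 1 ≤ j ∧ j ≤ (i:ℕ) then Nat.choose j r else 0 : ℕ)) : ZMod 2) := by
        have hpt : ∀ j : Fin n, (if (j:ℕ) ≥ 1 ∧ (i:ℕ) ≥ (j:ℕ) then (1:ZMod 2) else 0) * wvec n k (Sum.inl j)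
            = if 1 ≤ (j:ℕ) ∧ (j:ℕ) ≤ (i:ℕ) then ((Nat.choose (j:ℕ) r : ℕ) : ZMod 2) else 0 := by
          intro j
          rw [hvl j]
          simp only [ge_iff_le, boole_mul]
        rw [Finset.sum_congr rfl fun j _ => hpt j,
          Fin.sum_univ_eq_sum_range (fun j => if 1 ≤ j ∧ j ≤ (i:ℕ) then ((Nat.choose j r : ℕ) : ZMod 2) else 0) n,
          Nat.cast_sum]
        exact Finset.sum_congr rfl fun x _ => by split_ifs <;> simp
      have hSB : (∑ j : Fin n, (if (j:ℕ) = 0 ∨ ((i:ℕ) = n - 1 ∧ (j:ℕ) = n - 1) then (1:ZMod 2) else 0) * wvec n k (Sum.inr j))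
          = (if k = n then 1 else 0) := by
        have hpt : ∀ j : Fin n, (if (j:ℕ) = 0 ∨ ((i:ℕ) = n - 1 ∧ (j:ℕ) = n - 1) then (1:ZMod 2) else 0) * wvec n k (Sum.inr j)
            = if (j:ℕ) = 0 then (if k = n then 1 else 0) else 0 := by
          intro j
          have hi := i.isLt; have hj := j.isLt
          rw [hvr j]
          split_ifs <;> first | decide | omega
        rw [Finset.sum_congr rfl fun j _ => hpt j, sum_ind 0 (by omega) _]
      rw [hSA, hSB, hv, hR]
      have key : ((∑ j ∈ range n, if 1 ≤ j ∧ j ≤ (i:ℕ) then Nat.choose j r else 0 : ℕ) : ZMod 2)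
          + ((Nat.choose 0 r : ℕ) : ZMod 2) = ((Nat.choose ((i:ℕ)+1) (r+1) : ℕ) : ZMod 2) := by
        exact_mod_cast congrArg (Nat.cast : ℕ → ZMod 2) (natSA n (i:ℕ) r i.isLt)
      have hpas : ((Nat.choose ((i:ℕ)+1) (r+1) : ℕ) : ZMod 2)
          = ((Nat.choose (i:ℕ) r : ℕ) : ZMod 2) + ((Nat.choose (i:ℕ) (r+1) : ℕ) : ZMod 2) := by
        rw [Nat.choose_succ_succ']; push_cast; ring
      linear_combination key + hpas - h0r
    | inr i =>
      simp only [Pi.sub_apply, Sum.elim_inr, Pi.add_apply, Matrix.mulVec, dotProduct,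
        Matrix.of_apply, Function.comp]
      have hv : wvec n k (Sum.inr i) = (if k = n ∧ (i:ℕ) = 0 then 1 else 0) := hvr i
      have hR : wvec n (k+1) (Sum.inr i) = 0 := by
        simp only [wvec]
        rw [if_neg (by omega), if_neg (by omega)]
      have hSC : (∑ j : Fin n, (if (i:ℕ) = 0 ∧ (j:ℕ) = 0 then (1:ZMod 2) else 0) * wvec n k (Sum.inl j))
          = (if (i:ℕ) = 0 then ((Nat.choose 0 r : ℕ) : ZMod 2) else 0) := by
        have hpt : ∀ j : Fin n, (if (i:ℕ) = 0 ∧ (j:ℕ) = 0 then (1:ZMod 2) else 0) * wvec n k (Sum.inl j)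
            = if (j:ℕ) = 0 then (if (i:ℕ) = 0 then ((Nat.choose 0 r : ℕ) : ZMod 2) else 0) else 0 := by
          intro j
          rw [hvl j]
          by_cases hj : (j:ℕ) = 0
          · rw [if_pos hj, hj]
            by_cases hi0 : (i:ℕ) = 0
            · rw [if_pos ⟨hi0, rfl⟩, if_pos hi0, one_mul]
            · rw [if_neg (fun h => hi0 h.1), if_neg hi0, zero_mul]
          · rw [if_neg hj, if_neg (fun h => hj h.2), zero_mul]
        rw [Finset.sum_congr rfl fun j _ => hpt j, sum_ind 0 (by omega) _]
      have hSD : (∑ j : Fin n, (if ((i:ℕ) = (j:ℕ) ∧ (i:ℕ) ≥ 1) ∨ (j:ℕ) = (i:ℕ) + 1 then (1:ZMod 2) else 0) * wvec n k (Sum.inr j)) = 0 := by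
        refine Finset.sum_eq_zero fun j _ => ?_
        have hj := j.isLt
        rw [hvr j]
        split_ifs <;> first | decide | omega
      rw [hSC, hSD, hv, hR, h0r]
      split_ifs <;> first | decide | omega

lemma powChain (n : ℕ) (hn : 3 ≤ n) (k : ℕ) :
    (Nmat n ^ k).mulVec (wvec n 0) = wvec n k := by
  induction k with
  | zero => rw [pow_zero, Matrix.one_mulVec]
  | succ k ih =>
    rw [pow_succ', ← Matrix.mulVec_mulVec, ih, chain n hn k]

lemma wzero (n : ℕ) (hn : 3 ≤ n) : wvec n (2 * n) = 0 := by
  funext p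
  cases p with
  | inl i =>
    simp only [wvec]
    rw [if_neg (by omega), if_pos (by omega), show 2 * n - n = n by omega,
      Nat.choose_eq_zero_of_lt i.isLt]
    simp
  | inr i =>
    simp only [wvec]
    rw [if_neg (by omega), if_neg (by omega)]
    rfl

lemma wlast_ne (n : ℕ) (hn : 3 ≤ n) : wvec n (2 * n - 1) ≠ 0 := by
  intro h
  have h1 : wvec n (2 * n - 1) (Sum.inl ⟨n - 1, by omega⟩) = 1 := by
    simp only [wvec]
    rw [if_neg (by omega), if_pos (by omega), show 2 * n - 1 - n = n - 1 by omega,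
      Nat.choose_self]
    simp
  rw [h] at h1
  exact one_ne_zero h1.symm

-- generic: a chain of length m+1 is linearly independent
lemma li_chain {V : Type*} [AddCommGroup V] [Module (ZMod 2) V]
    (g : V →ₗ[ZMod 2] V) (v : V) (m : ℕ)
    (h1 : (g ^ m) v ≠ 0) (h0 : (g ^ (m + 1)) v = 0) :
    LinearIndependent (ZMod 2) (fun k : Fin (m + 1) => (g ^ (k : ℕ)) v) := by
  rw [Fintype.linearIndependent_iff]
  intro c hc
  suffices H : ∀ k, ∀ hk : k < m + 1, c ⟨k, hk⟩ = 0 by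
    intro i; have := H i i.2; simpa using this
  intro k
  induction k using Nat.strong_induction_on with
  | _ k IH =>
  intro hk
  have h2 : (g ^ (m - k)) (∑ i, c i • (g ^ (i : ℕ)) v) = 0 := by rw [hc]; simp
  rw [map_sum] at h2
  have h3 : ∀ i : Fin (m + 1), (g ^ (m - k)) (c i • (g ^ (i : ℕ)) v)
      = c i • (g ^ ((m - k) + (i : ℕ))) v := by
    intro i; rw [_root_.map_smul, ← Module.End.mul_apply, ← pow_add]
  rw [Finset.sum_congr rfl fun i _ => h3 i] at h2
  have h4 : (∑ i : Fin (m + 1), c i • (g ^ ((m - k) + (i : ℕ))) v)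
      = c ⟨k, hk⟩ • (g ^ m) v := by
    rw [Fintype.sum_eq_single (⟨k, hk⟩ : Fin (m + 1)) ?_]
    · rw [show m - k + k = m by omega]
    · intro i hi
      have hine : (i : ℕ) ≠ k := fun e => hi (Fin.ext e)
      by_cases hik : (i : ℕ) < k
      · have : c i = 0 := by
          have := IH (i : ℕ) hik i.2
          simpa using this
        rw [this, zero_smul]
      · have he : (m - k) + (i : ℕ) = ((i : ℕ) - k - 1) + (m + 1) := by omega
        rw [he, pow_add, Module.End.mul_apply, h0, map_zero, smul_zero]
  rw [h4] at h2
  rcases smul_eq_zero.mp h2 with h | h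
  · exact h
  · exact absurd h h1

lemma Npow2n (n : ℕ) (hn : 3 ≤ n) : Nmat n ^ (2 * n) = 0 := by
  set g : ((Fin n ⊕ Fin n) → ZMod 2) →ₗ[ZMod 2] ((Fin n ⊕ Fin n) → ZMod 2) :=
    Matrix.toLinAlgEquiv' (Nmat n) with hg
  have hpow : ∀ k : ℕ, (g ^ k) (wvec n 0) = wvec n k := by
    intro k
    induction k with
    | zero => simp
    | succ k ih =>
      rw [pow_succ', Module.End.mul_apply, ih, hg, Matrix.toLinAlgEquiv'_apply,
        chain n hn k]
  have h1 : (g ^ (2 * n - 1)) (wvec n 0) ≠ 0 := by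
    rw [hpow]; exact wlast_ne n hn
  have h0 : (g ^ (2 * n - 1 + 1)) (wvec n 0) = 0 := by
    rw [show 2 * n - 1 + 1 = 2 * n by omega, hpow]; exact wzero n hn
  have li := li_chain g (wvec n 0) (2 * n - 1) h1 h0
  have hcard : Fintype.card (Fin (2 * n - 1 + 1))
      = Module.finrank (ZMod 2) ((Fin n ⊕ Fin n) → ZMod 2) := by
    rw [Module.finrank_fintype_fun_eq_card, Fintype.card_fin, Fintype.card_sum,
      Fintype.card_fin]
    omega
  have : Nonempty (Fin (2 * n - 1 + 1)) := ⟨0⟩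
  let bas := basisOfLinearIndependentOfCardEqFinrank li hcard
  have hbas : ∀ k : Fin (2 * n - 1 + 1), bas k = (g ^ (k : ℕ)) (wvec n 0) := by
    intro k
    rw [show bas k = (⇑bas) k from rfl, coe_basisOfLinearIndependentOfCardEqFinrank]
  have hgz : g ^ (2 * n) = 0 := by
    apply bas.ext
    intro k
    rw [hbas k, LinearMap.zero_apply, ← Module.End.mul_apply, ← pow_add,
      show 2 * n + (k : ℕ) = (k : ℕ) + 2 * n by omega, pow_add, Module.End.mul_apply,
      hpow, wzero n hn, map_zero]
  have : Matrix.toLinAlgEquiv' (Nmat n ^ (2 * n)) = 0 := by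
    rw [map_pow, ← hg, hgz]
  have := congrArg (Matrix.toLinAlgEquiv' (R := ZMod 2) (n := Fin n ⊕ Fin n)).symm this
  simpa using this

lemma Npow2n1 (n : ℕ) (hn : 3 ≤ n) : Nmat n ^ (2 * n - 1) ≠ 0 := by
  intro h
  have := powChain n hn (2 * n - 1)
  rw [h, Matrix.zero_mulVec] at this
  exact wlast_ne n hn this.symm



/-- Nilpotency index of the symplectic matrix of the
`S_X`-CNOT-`H` string: with the blocks `A, B, C, D` below (entries written
0-indexed, corresponding to the paper's 1-indexed conditions
`A_{ij} = 1 ↔ (i ≥ j ∧ j > 1)`, `B_{ij} = 1 ↔ (j = 1 ∨ i = j = n)`,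
`C_{ij} = 1 ↔ i = j = 1`, `D_{ij} = 1 ↔ ((i = j ∧ i > 1) ∨ j = i + 1)`),
the matrix `N = M_n − I_{2n}` is nilpotent of index exactly `2n`. -/
theorem sch_symplectic_nilpotency_index (n : ℕ) (hn : 3 ≤ n)
    (A B C D : Matrix (Fin n) (Fin n) (ZMod 2))
    (hA : A = Matrix.of fun i j : Fin n =>
      if (j : ℕ) ≥ 1 ∧ (i : ℕ) ≥ (j : ℕ) then 1 else 0)
    (hB : B = Matrix.of fun i j : Fin n =>
      if (j : ℕ) = 0 ∨ ((i : ℕ) = n - 1 ∧ (j : ℕ) = n - 1) then 1 else 0)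
    (hC : C = Matrix.of fun i j : Fin n =>
      if (i : ℕ) = 0 ∧ (j : ℕ) = 0 then 1 else 0)
    (hD : D = Matrix.of fun i j : Fin n =>
      if ((i : ℕ) = (j : ℕ) ∧ (i : ℕ) ≥ 1) ∨ (j : ℕ) = (i : ℕ) + 1 then 1 else 0) :
    (Matrix.fromBlocks A B C D - 1) ^ (2 * n) = 0 ∧
      (Matrix.fromBlocks A B C D - 1) ^ (2 * n - 1) ≠ 0 := by
  subst hA hB hC hD
  have hN : Matrix.fromBlocks
      (Matrix.of fun i j : Fin n => if (j : ℕ) ≥ 1 ∧ (i : ℕ) ≥ (j : ℕ) then (1 : ZMod 2) else 0)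
      (Matrix.of fun i j : Fin n => if (j : ℕ) = 0 ∨ ((i : ℕ) = n - 1 ∧ (j : ℕ) = n - 1) then 1 else 0)
      (Matrix.of fun i j : Fin n => if (i : ℕ) = 0 ∧ (j : ℕ) = 0 then 1 else 0)
      (Matrix.of fun i j : Fin n => if ((i : ℕ) = (j : ℕ) ∧ (i : ℕ) ≥ 1) ∨ (j : ℕ) = (i : ℕ) + 1 then 1 else 0)
      - 1 = Nmat n := rfl
  rw [hN]
  exact ⟨Npow2n n hn, Npow2n1 n hn⟩
end
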